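/- arXiv:2309.11240 — 10 statements merged into one kernel-verified Lean document; each statement's English description precedes it below -/
import Mathlib

section
/- For each root w of φ and any vector f ∈ ℝⁿ with associated polynomial f(x) = Σ_{j=0}^{n-1} f_j x^j, the transpose of the n×m generalized ideal matrix H*(f)_{n×m} = [f, Hf, H²f, …, H^{m-1}f] maps the vector (1, w, …, w^{n-1})ᵀ to f(w)·(1, w, …, w^{m-1})ᵀ. -/
/-! `v = (1, w, …, w^{n-1})` is an eigenvector of the companion-type matrix `H_φᵀ` with eigenvalue
`w`: shifting `v` gives `w v` in every entry but the last, where `φ(w) = 0` supplies `wⁿ`.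
Hence `(Hʲ)ᵀ v = wʲ v`, and the `j`-th entry of `H*(f)ᵀ v` is `f ⬝ (Hʲ)ᵀ v = wʲ f(w)`. -/

open Polynomial Matrix

/-- The rotation matrix `H_φ` of a monic polynomial
`φ(x) = xⁿ − φ_{n-1}x^{n-1} − ⋯ − φ₁x − φ₀` (note `φᵢ = -(coeff φ i)` for `i < n`). -/
def rotMat (n : ℕ) (φ : Polynomial ℂ) : Matrix (Fin n) (Fin n) ℂ :=
  Matrix.of fun i j =>
    if (j : ℕ) + 1 < n then (if (i : ℕ) = (j : ℕ) + 1 then 1 else 0)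
    else -φ.coeff (i : ℕ)

/-- The `n × m` generalized ideal matrix `H*(f) = [f, Hf, H²f, …, H^{m-1}f]`. -/
noncomputable def genIdealMat (n m : ℕ) (H : Matrix (Fin n) (Fin n) ℂ) (f : Fin n → ℂ) :
    Matrix (Fin n) (Fin m) ℂ :=
  Matrix.of fun i j => (H ^ (j : ℕ)).mulVec f i

lemma Polynomial.Monic.sum_coeff_mul_pow_eq_neg_pow {R : Type*} [CommRing R] {φ : R[X]}
    (hmonic : φ.Monic) {w : R} (hw : φ.IsRoot w) :
    ∑ j : Fin φ.natDegree, φ.coeff j * w ^ (j : ℕ) = -w ^ φ.natDegree := by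
  have h := hw.eq_zero
  rw [hmonic.as_sum] at h
  simp only [eval_add, eval_pow, eval_X, eval_finsetSum, eval_mul, eval_C] at h
  rw [Fin.sum_univ_eq_sum_range (fun j => φ.coeff j * w ^ j)]
  linear_combination h

lemma Matrix.pow_mulVec_of_mulVec_eq_smul {ι R : Type*} [Fintype ι] [DecidableEq ι]
    [CommSemiring R] {A : Matrix ι ι R} {v : ι → R} {c : R} (h : A *ᵥ v = c • v) (k : ℕ) :
    (A ^ k) *ᵥ v = c ^ k • v := by
  induction k with
  | zero => simp
  | succ k ih => rw [pow_succ, ← mulVec_mulVec, h, mulVec_smul, ih, smul_smul, pow_succ']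

lemma rotMat_transpose_mulVec_powers {n : ℕ} {φ : ℂ[X]} (hmonic : φ.Monic)
    (hdeg : φ.natDegree = n) {w : ℂ} (hw : φ.IsRoot w) :
    (rotMat n φ)ᵀ *ᵥ (fun i : Fin n => w ^ (i : ℕ)) = w • fun i : Fin n => w ^ (i : ℕ) := by
  funext i
  simp only [mulVec, dotProduct, transpose_apply, rotMat, of_apply, Pi.smul_apply, smul_eq_mul,
    ← pow_succ']
  split_ifs with hlt
  · rw [Fintype.sum_eq_single ⟨i + 1, hlt⟩ fun j hj => by rw [if_neg (hj <| Fin.ext ·), zero_mul]]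
    simp
  · have hin : (i : ℕ) + 1 = n := by omega
    subst hdeg
    simp only [neg_mul, Finset.sum_neg_distrib, hmonic.sum_coeff_mul_pow_eq_neg_pow hw, neg_neg,
      hin]

lemma genIdealMat_transpose_mulVec_apply {n m : ℕ} (H : Matrix (Fin n) (Fin n) ℂ)
    (f v : Fin n → ℂ) (j : Fin m) :
    ((genIdealMat n m H f)ᵀ *ᵥ v) j = f ⬝ᵥ ((H ^ (j : ℕ))ᵀ *ᵥ v) := by
  change (H ^ (j : ℕ) *ᵥ f) ⬝ᵥ v = _
  rw [← vecMul_transpose, dotProduct_mulVec]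

theorem genIdealMat_transpose_mulVec_general (n m : ℕ) (φ : Polynomial ℂ)
    (hmonic : φ.Monic) (hdeg : φ.natDegree = n)
    (w : ℂ) (hw : φ.IsRoot w) (f : Fin n → ℝ) :
    (genIdealMat n m (rotMat n φ) (fun i => (f i : ℂ)))ᵀ.mulVec
        (fun i : Fin n => w ^ (i : ℕ)) =
      (∑ j : Fin n, (f j : ℂ) * w ^ (j : ℕ)) • (fun i : Fin m => w ^ (i : ℕ)) := by
  funext j
  rw [genIdealMat_transpose_mulVec_apply, transpose_pow,
    pow_mulVec_of_mulVec_eq_smul (rotMat_transpose_mulVec_powers hmonic hdeg hw),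
    dotProduct_smul, Pi.smul_apply, smul_eq_mul, smul_eq_mul, mul_comm]
  rfl

/-- For each root `w` of `φ` and any `f ∈ ℝⁿ` with polynomial `f(x) = Σ fⱼ xʲ`,
the transpose of `H*(f)_{n×m}` maps `(1, w, …, w^{n-1})ᵀ` to `f(w)·(1, w, …, w^{m-1})ᵀ`. -/
theorem genIdealMat_transpose_mulVec (n m : ℕ) (hn : 0 < n) (φ : Polynomial ℂ)
    (hmonic : φ.Monic) (hdeg : φ.natDegree = n) (h0 : φ.coeff 0 ≠ 0)
    (w : ℂ) (hw : φ.IsRoot w) (f : Fin n → ℝ) :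
    (genIdealMat n m (rotMat n φ) (fun i => (f i : ℂ)))ᵀ.mulVec
        (fun i : Fin n => w ^ (i : ℕ)) =
      (∑ j : Fin n, (f j : ℂ) * w ^ (j : ℕ)) • (fun i : Fin m => w ^ (i : ℕ)) :=
  genIdealMat_transpose_mulVec_general n m φ hmonic hdeg w hw f
end

section
/- With V_φⁿ the n×n Vandermonde matrix on the roots w₁,…,w_n of φ, and V_φ^{m×n} the m×n matrix with (i,j)-entry w_j^{i-1}, one has [H*(f)_{n×m}]ᵀ · V_φⁿ = V_φ^{m×n} · diag(f(w₁), …, f(w_n)). -/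
open Polynomial Matrix

/-! The row `(1, w, …, w^{n-1})` of powers of a root `w` of `φ` is a left eigenvector of `H_φ` with
eigenvalue `w`: the last column of `H_φ` encodes `wⁿ = φ_{n-1}w^{n-1} + ⋯ + φ₀`. Hence
`(1, w, …, w^{n-1}) ⬝ H_φ^i f = wⁱ f(w)`, which is the `(i, j)` entry of both sides at `w = wⱼ`. -/

theorem Polynomial.Monic.sum_coeff_mul_pow_eq_neg_pow_s3 {R : Type*} [CommRing R] {p : R[X]}
    (hp : p.Monic) {n : ℕ} (hdeg : p.natDegree = n) {x : R} (hx : p.IsRoot x) :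
    ∑ k : Fin n, p.coeff k * x ^ (k : ℕ) = -x ^ n := by
  subst hdeg
  have h := hx.eq_zero
  rw [hp.as_sum, eval_add, eval_pow, eval_X, eval_finsetSum] at h
  simp only [eval_mul, eval_C, eval_pow, eval_X] at h
  rw [Fin.sum_univ_eq_sum_range (fun k => p.coeff k * x ^ k)]
  linear_combination h

theorem Matrix.vecMul_pow_eq_pow_smul_of_vecMul_eq_smul {ι R : Type*} [Fintype ι]
    [DecidableEq ι] [CommSemiring R] {A : Matrix ι ι R} {v : ι → R} {μ : R}
    (h : v ᵥ* A = μ • v) (p : ℕ) :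
    v ᵥ* A ^ p = μ ^ p • v := by
  induction p with
  | zero => simp
  | succ p ih => rw [pow_succ, ← vecMul_vecMul, ih, smul_vecMul, h, smul_smul, pow_succ]

theorem vecMul_rotMat_of_isRoot {n : ℕ} {φ : ℂ[X]} (hmonic : φ.Monic) (hdeg : φ.natDegree = n)
    {w : ℂ} (hw : φ.IsRoot w) :
    (fun i : Fin n => w ^ (i : ℕ)) ᵥ* rotMat n φ = w • fun i : Fin n => w ^ (i : ℕ) := by
  funext i
  simp only [vecMul, dotProduct, rotMat, of_apply, Pi.smul_apply, smul_eq_mul]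
  split_ifs with h
  · rw [Fintype.sum_eq_single ⟨i + 1, h⟩ fun k hk => by
      rw [if_neg fun hk' => hk (Fin.ext hk'), mul_zero]]
    simp [pow_succ']
  · have hi : (i : ℕ) + 1 = n := by omega
    calc ∑ k : Fin n, w ^ (k : ℕ) * -φ.coeff k
        = -∑ k : Fin n, φ.coeff k * w ^ (k : ℕ) := by
          simp only [mul_neg, Finset.sum_neg_distrib, mul_comm]
      _ = w * w ^ (i : ℕ) := by
          rw [hmonic.sum_coeff_mul_pow_eq_neg_pow_s3 hdeg hw, neg_neg, ← pow_succ', hi]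

theorem genIdealMat_transpose_mul_vandermonde_general (n m : ℕ) (φ : Polynomial ℂ)
    (hmonic : φ.Monic) (hdeg : φ.natDegree = n)
    (w : Fin n → ℂ)
    (hroots : ∀ j, φ.IsRoot (w j) ∧ w j ≠ 0) (f : Fin n → ℝ) :
    (genIdealMat n m (rotMat n φ) (fun i => (f i : ℂ)))ᵀ *
        (Matrix.of fun i j : Fin n => w j ^ (i : ℕ)) =
      (Matrix.of fun (i : Fin m) (j : Fin n) => w j ^ (i : ℕ)) *
        Matrix.diagonal (fun j : Fin n => ∑ k : Fin n, (f k : ℂ) * w j ^ (k : ℕ)) := by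
  ext i j
  have heigen := vecMul_pow_eq_pow_smul_of_vecMul_eq_smul
    (vecMul_rotMat_of_isRoot hmonic hdeg (hroots j).1) i
  rw [mul_diagonal, of_apply]
  calc ∑ k : Fin n, (rotMat n φ ^ (i : ℕ) *ᵥ fun k => (f k : ℂ)) k * w j ^ (k : ℕ)
      = (fun k : Fin n => w j ^ (k : ℕ)) ⬝ᵥ (rotMat n φ ^ (i : ℕ) *ᵥ fun k => (f k : ℂ)) := by
        simp only [dotProduct, mul_comm]
    _ = w j ^ (i : ℕ) * ∑ k : Fin n, (f k : ℂ) * w j ^ (k : ℕ) := by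
        rw [dotProduct_mulVec, heigen, smul_dotProduct, smul_eq_mul]
        simp only [dotProduct, mul_comm]

/-- With `V_φⁿ` the `n × n` Vandermonde matrix on the distinct nonzero roots `w₁,…,wₙ` of `φ`
and `V_φ^{m×n}` the `m × n` matrix with `(i,j)` entry `wⱼ^{i-1}`, one has
`[H*(f)_{n×m}]ᵀ ⬝ V_φⁿ = V_φ^{m×n} ⬝ diag(f(w₁), …, f(wₙ))`. -/
theorem genIdealMat_transpose_mul_vandermonde (n m : ℕ) (hn : 0 < n) (φ : Polynomial ℂ)
    (hmonic : φ.Monic) (hdeg : φ.natDegree = n) (h0 : φ.coeff 0 ≠ 0)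
    (w : Fin n → ℂ) (hinj : Function.Injective w)
    (hroots : ∀ j, φ.IsRoot (w j) ∧ w j ≠ 0) (f : Fin n → ℝ) :
    (genIdealMat n m (rotMat n φ) (fun i => (f i : ℂ)))ᵀ *
        (Matrix.of fun i j : Fin n => w j ^ (i : ℕ)) =
      (Matrix.of fun (i : Fin m) (j : Fin n) => w j ^ (i : ℕ)) *
        Matrix.diagonal (fun j : Fin n => ∑ k : Fin n, (f k : ℂ) * w j ^ (k : ℕ)) :=
  genIdealMat_transpose_mul_vandermonde_general n m φ hmonic hdeg w hroots f
end

section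
/- If d = deg gcd(f(x), φ(x)) and r = min{m, n−d}, then the rank of the generalized ideal matrix H*(f)_{n×m} equals r. -/
open Polynomial Matrix

/-- The polynomial `f(x) = Σ_{j=0}^{n-1} fⱼ xʲ` associated to a vector `f`. -/
noncomputable def vecPoly (n : ℕ) (f : Fin n → ℂ) : Polynomial ℂ :=
  ∑ j : Fin n, Polynomial.C (f j) * Polynomial.X ^ (j : ℕ)

/-!
Identify `ℂⁿ` with `ℂ[x]/(φ)` through `v ↦ Σ vᵢ αⁱ`, `α` the class of `x`; this is injective since
`1, α, …, α^{n-1}` is a basis. It turns `H_φ` into multiplication by `α`, so `H*(f) c` becomes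
`c(α) f(α)`. Writing `φ = d ψ` with `d = gcd(f, φ)`, `φ` divides `c f` exactly when `ψ` divides `c`,
so `H*(f)` has the same kernel as `c ↦ c(β) ∈ ℂ[x]/(ψ)`, `β` the class of `x` there. The image of
the latter is spanned by `1, β, …, β^{m-1}` and has dimension `min(m, deg ψ) = min(m, n − deg d)`.
-/

theorem EuclideanDomain.isCoprime_div_gcd_div_gcd {R : Type*} [EuclideanDomain R]
    [DecidableEq R] {a b : R} (h : gcd a b ≠ 0) :
    IsCoprime (a / gcd a b) (b / gcd a b) := by
  refine ⟨gcdA a b, gcdB a b, mul_left_cancel₀ h ?_⟩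
  conv_rhs => rw [mul_one, gcd_eq_gcd_ab]
  rw [mul_add, mul_left_comm, EuclideanDomain.mul_div_cancel' h (gcd_dvd_left a b), mul_left_comm,
    EuclideanDomain.mul_div_cancel' h (gcd_dvd_right a b), mul_comm a, mul_comm b]

theorem EuclideanDomain.dvd_mul_iff_div_gcd_dvd {R : Type*} [EuclideanDomain R]
    [DecidableEq R] {a b : R} (g : R) (h : gcd a b ≠ 0) :
    b ∣ g * a ↔ b / gcd a b ∣ g := by
  have ha := EuclideanDomain.mul_div_cancel' h (gcd_dvd_left a b)
  have hb := EuclideanDomain.mul_div_cancel' h (gcd_dvd_right a b)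
  calc b ∣ g * a ↔ gcd a b * (b / gcd a b) ∣ gcd a b * (g * (a / gcd a b)) := by
        rw [mul_left_comm, ha, hb]
    _ ↔ b / gcd a b ∣ g * (a / gcd a b) := mul_dvd_mul_iff_left h
    _ ↔ b / gcd a b ∣ g := ⟨(isCoprime_div_gcd_div_gcd h).symm.dvd_of_dvd_mul_right,
        fun hg => hg.mul_right _⟩

theorem LinearMap.finrank_range_eq_of_ker_eq {R M N P : Type*} [Ring R] [AddCommGroup M]
    [AddCommGroup N] [AddCommGroup P] [Module R M] [Module R N] [Module R P]
    {f : M →ₗ[R] N} {g : M →ₗ[R] P} (h : ker f = ker g) :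
    Module.finrank R (range f) = Module.finrank R (range g) :=
  (f.quotKerEquivRange.symm.trans
    ((Submodule.quotEquivOfEq _ _ h).trans g.quotKerEquivRange)).finrank_eq

section RootPowComb

variable {R K : Type*} [CommRing R] [Field K]

noncomputable def rootPowComb (m : ℕ) (ψ : R[X]) : (Fin m → R) →ₗ[R] AdjoinRoot ψ :=
  Fintype.linearCombination R fun i : Fin m => AdjoinRoot.root ψ ^ (i : ℕ)

theorem rootPowComb_apply (m : ℕ) (ψ : R[X]) (c : Fin m → R) :
    rootPowComb m ψ c = ∑ i, c i • AdjoinRoot.root ψ ^ (i : ℕ) :=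
  Fintype.linearCombination_apply _ _ _

theorem AdjoinRoot.root_pow_eq_neg_sum {φ : R[X]} (hmonic : φ.Monic) :
    root φ ^ φ.natDegree = -∑ i ∈ Finset.range φ.natDegree, φ.coeff i • root φ ^ i := by
  have h := congrArg (aeval (root φ)) hmonic.as_sum
  rw [aeval_eq, mk_self] at h
  refine eq_neg_of_add_eq_zero_left ?_
  simpa [Algebra.smul_def] using h.symm

theorem linearIndependent_root_pow {ψ : K[X]} (hψ : ψ ≠ 0) {m : ℕ} (hm : m ≤ ψ.natDegree) :
    LinearIndependent K fun i : Fin m => AdjoinRoot.root ψ ^ (i : ℕ) := by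
  have := (AdjoinRoot.powerBasis hψ).basis.linearIndependent.comp (Fin.castLE hm)
    (Fin.castLE_injective hm)
  simp only [PowerBasis.coe_basis, AdjoinRoot.powerBasis_gen, Function.comp_def] at this
  exact this

theorem finrank_range_rootPowComb {ψ : K[X]} (hψ : ψ ≠ 0) (m : ℕ) :
    Module.finrank K (LinearMap.range (rootPowComb m ψ)) = min m ψ.natDegree := by
  rw [rootPowComb, Fintype.range_linearCombination]
  rcases le_total m ψ.natDegree with hm | hm
  · rw [finrank_span_eq_card (linearIndependent_root_pow hψ hm), Fintype.card_fin,
      min_eq_left hm]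
  · have hspan :
        Submodule.span K (Set.range fun i : Fin m => AdjoinRoot.root ψ ^ (i : ℕ)) = ⊤ := by
      rw [eq_top_iff, ← (AdjoinRoot.powerBasis hψ).basis.span_eq, Submodule.span_le]
      rintro _ ⟨i, rfl⟩
      exact Submodule.subset_span ⟨Fin.castLE hm i, by simp; rfl⟩
    rw [hspan, finrank_top, (AdjoinRoot.powerBasis hψ).finrank, AdjoinRoot.powerBasis_dim,
      min_eq_right hm]

end RootPowComb

theorem rootPowComb_eq_mk_vecPoly (m : ℕ) (ψ : ℂ[X]) (c : Fin m → ℂ) :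
    rootPowComb m ψ c = AdjoinRoot.mk ψ (vecPoly m c) := by
  simp [rootPowComb_apply, vecPoly, Algebra.smul_def]

section RotMat

variable {n : ℕ} {φ : ℂ[X]}

theorem rootPowComb_col_rotMat (hmonic : φ.Monic) (hdeg : φ.natDegree = n) (j : Fin n) :
    rootPowComb n φ ((rotMat n φ).col j) = AdjoinRoot.root φ ^ ((j : ℕ) + 1) := by
  rw [rootPowComb_apply]
  simp only [col_apply, rotMat, of_apply]
  split_ifs with h
  · rw [Fin.sum_univ_eq_sum_range (fun i => (if i = (j : ℕ) + 1 then (1 : ℂ) else 0) •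
      AdjoinRoot.root φ ^ i)]
    simp [ite_smul, h]
  · rw [Fin.sum_univ_eq_sum_range (fun i => -φ.coeff i • AdjoinRoot.root φ ^ i),
      show (j : ℕ) + 1 = n by omega, ← hdeg, AdjoinRoot.root_pow_eq_neg_sum hmonic]
    simp only [neg_smul, Finset.sum_neg_distrib]

theorem rootPowComb_rotMat_mulVec (hmonic : φ.Monic) (hdeg : φ.natDegree = n)
    (v : Fin n → ℂ) :
    rootPowComb n φ (rotMat n φ *ᵥ v) = AdjoinRoot.root φ * rootPowComb n φ v := by
  suffices rootPowComb n φ ∘ₗ (rotMat n φ).mulVecLin =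
      LinearMap.mulLeft ℂ (AdjoinRoot.root φ) ∘ₗ rootPowComb n φ from
    LinearMap.congr_fun this v
  refine LinearMap.pi_ext' fun j => LinearMap.ext_ring ?_
  simp [rootPowComb_col_rotMat hmonic hdeg, rootPowComb_apply, pow_succ']

theorem rootPowComb_rotMat_pow_mulVec (hmonic : φ.Monic) (hdeg : φ.natDegree = n) (j : ℕ)
    (v : Fin n → ℂ) :
    rootPowComb n φ ((rotMat n φ) ^ j *ᵥ v) = AdjoinRoot.root φ ^ j * rootPowComb n φ v := by
  induction j with
  | zero => simp
  | succ j ih =>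
    rw [pow_succ', ← mulVec_mulVec, rootPowComb_rotMat_mulVec hmonic hdeg, ih, pow_succ',
      mul_assoc]

theorem rootPowComb_genIdealMat_mulVec {m : ℕ} (hmonic : φ.Monic) (hdeg : φ.natDegree = n)
    (f : Fin n → ℂ) (c : Fin m → ℂ) :
    rootPowComb n φ (genIdealMat n m (rotMat n φ) f *ᵥ c) =
      rootPowComb m φ c * rootPowComb n φ f := by
  have hcols :
      genIdealMat n m (rotMat n φ) f *ᵥ c = ∑ j, c j • ((rotMat n φ) ^ (j : ℕ) *ᵥ f) := by
    ext i
    simp [genIdealMat, mulVec, dotProduct, Finset.sum_apply, mul_comm]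
  simp only [hcols, map_sum, map_smul, rootPowComb_rotMat_pow_mulVec hmonic hdeg,
    rootPowComb_apply m, Finset.sum_mul, smul_mul_assoc]

theorem ker_rootPowComb_comp_genIdealMat {m : ℕ} (hmonic : φ.Monic) (hdeg : φ.natDegree = n)
    (f : Fin n → ℂ) :
    LinearMap.ker (rootPowComb n φ ∘ₗ (genIdealMat n m (rotMat n φ) f).mulVecLin) =
      LinearMap.ker (rootPowComb m (φ / EuclideanDomain.gcd (vecPoly n f) φ)) := by
  have hgcd : EuclideanDomain.gcd (vecPoly n f) φ ≠ 0 := fun h =>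
    hmonic.ne_zero (EuclideanDomain.gcd_eq_zero_iff.mp h).2
  ext c
  rw [LinearMap.mem_ker, LinearMap.mem_ker, LinearMap.comp_apply, mulVecLin_apply,
    rootPowComb_genIdealMat_mulVec hmonic hdeg, rootPowComb_eq_mk_vecPoly,
    rootPowComb_eq_mk_vecPoly, rootPowComb_eq_mk_vecPoly, ← map_mul, AdjoinRoot.mk_eq_zero,
    AdjoinRoot.mk_eq_zero, EuclideanDomain.dvd_mul_iff_div_gcd_dvd _ hgcd]

end RotMat

theorem genIdealMat_rank_general (n m : ℕ) (φ : Polynomial ℂ)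
    (hmonic : φ.Monic) (hdeg : φ.natDegree = n) (f : Fin n → ℂ) :
    (genIdealMat n m (rotMat n φ) f).rank =
      min m (n - (EuclideanDomain.gcd (vecPoly n f) φ).natDegree) := by
  set D := EuclideanDomain.gcd (vecPoly n f) φ
  have hφ : φ ≠ 0 := hmonic.ne_zero
  have hD : D ≠ 0 := fun h => hφ (EuclideanDomain.gcd_eq_zero_iff.mp h).2
  have hDψ : D * (φ / D) = φ :=
    EuclideanDomain.mul_div_cancel' hD (EuclideanDomain.gcd_dvd_right _ _)
  have hψ : φ / D ≠ 0 := right_ne_zero_of_mul (hDψ ▸ hφ)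
  have hdegψ : n - D.natDegree = (φ / D).natDegree := by
    have := natDegree_mul hD hψ
    rw [hDψ, hdeg] at this
    omega
  have hinj : LinearMap.ker (rootPowComb n φ) = ⊥ := LinearMap.ker_eq_bot.mpr
    (linearIndependent_root_pow hφ hdeg.ge).fintypeLinearCombination_injective
  rw [hdegψ, ← finrank_range_rootPowComb hψ,
    ← LinearMap.finrank_range_eq_of_ker_eq (ker_rootPowComb_comp_genIdealMat hmonic hdeg f),
    Matrix.rank, LinearMap.finrank_range_eq_of_ker_eq (LinearMap.ker_comp_of_ker_eq_bot _ hinj)]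

/-- If `d = deg gcd(f(x), φ(x))` and `r = min {m, n − d}`, then the rank of the
generalized ideal matrix `H*(f)_{n×m}` equals `r`. -/
theorem genIdealMat_rank (n m : ℕ) (hn : 0 < n) (φ : Polynomial ℂ)
    (hmonic : φ.Monic) (hdeg : φ.natDegree = n) (h0 : φ.coeff 0 ≠ 0)
    (hsqfree : Squarefree φ) (f : Fin n → ℂ) :
    (genIdealMat n m (rotMat n φ) f).rank =
      min m (n - (EuclideanDomain.gcd (vecPoly n f) φ).natDegree) :=
  genIdealMat_rank_general n m φ hmonic hdeg f
end

section
/- If d = deg gcd(f(x), φ(x)) and r = min{m, n−d}, then the first r columns f, Hf, …, H^{r-1}f of H*(f)_{n×m} are linearly independent. -/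
open Polynomial Matrix

/-! Identify a vector `v ∈ ℂⁿ` with the class of its polynomial `v(x)` in `ℂ[X] ⧸ (φ)`. The
columns of `H_φ` are `x^{j+1}` for `j < n - 1` and `xⁿ - φ` for `j = n - 1`, so `H_φ` acts as
multiplication by `x`. A relation `∑ aⱼ Hʲ f = 0` therefore says `φ ∣ a(x) f(x)`, and Bézout
upgrades this to `φ ∣ a(x) gcd(f, φ)`, which is impossible for `a ≠ 0` of degree
`< n - deg gcd(f, φ)`. -/

open AdjoinRoot

theorem EuclideanDomain.dvd_mul_gcd_of_dvd_mul {R : Type*} [EuclideanDomain R] [DecidableEq R]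
    {a b c : R} (h : a ∣ b * c) : a ∣ b * gcd c a := by
  rw [gcd_eq_gcd_ab, mul_add, ← mul_assoc, mul_left_comm]
  exact dvd_add (h.mul_right _) (dvd_mul_right _ _)

theorem Polynomial.eq_zero_of_dvd_mul_of_degree_lt {K : Type*} [Field K] [DecidableEq K]
    {φ p F : K[X]} (hφ : φ ≠ 0) (hdvd : φ ∣ p * F)
    (hp : p.degree < ↑(φ.natDegree - (EuclideanDomain.gcd F φ).natDegree)) : p = 0 := by
  by_contra hp0
  have hG : EuclideanDomain.gcd F φ ≠ 0 := fun h => hφ (EuclideanDomain.gcd_eq_zero_iff.mp h).2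
  have := natDegree_le_of_dvd (EuclideanDomain.dvd_mul_gcd_of_dvd_mul hdvd) (mul_ne_zero hp0 hG)
  rw [natDegree_mul hp0 hG] at this
  rw [degree_eq_natDegree hp0, Nat.cast_lt] at hp
  omega

theorem Polynomial.linearIndependent_X_pow_fin (R : Type*) [Semiring R] (r : ℕ) :
    LinearIndependent R (fun j : Fin r => (X : R[X]) ^ (j : ℕ)) := by
  simpa [Function.comp_def, coe_basisMonomials, monomial_one_right_eq_X_pow] using
    (basisMonomials R).linearIndependent.comp _ Fin.val_injective

theorem AdjoinRoot.linearIndependent_root_pow_mul {K : Type*} [Field K] [DecidableEq K]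
    {φ : K[X]} (F : K[X]) (hφ : φ ≠ 0) {r : ℕ}
    (hr : r ≤ φ.natDegree - (EuclideanDomain.gcd F φ).natDegree) :
    LinearIndependent K (fun j : Fin r => root φ ^ (j : ℕ) * mk φ F) := by
  rw [Fintype.linearIndependent_iff]
  intro a ha
  set g := ∑ j : Fin r, C (a j) * X ^ (j : ℕ)
  have hgF : φ ∣ g * F := by
    rw [← mk_eq_zero, ← ha]
    simp [g, Finset.sum_mul, mul_assoc, Algebra.smul_def]
  have hg : g = 0 := eq_zero_of_dvd_mul_of_degree_lt hφ hgF
    ((degree_sum_fin_lt a).trans_le (by exact_mod_cast hr))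
  refine Fintype.linearIndependent_iff.mp (linearIndependent_X_pow_fin K r) a ?_
  simpa [g, smul_eq_C_mul] using hg

theorem vecPoly_eq_linearCombination (n : ℕ) (f : Fin n → ℂ) :
    vecPoly n f = Fintype.linearCombination ℂ (fun j : Fin n => (X : ℂ[X]) ^ (j : ℕ)) f := by
  simp [vecPoly, Fintype.linearCombination_apply, smul_eq_C_mul]

theorem vecPoly_single_one {n : ℕ} (j : Fin n) : vecPoly n (Pi.single j 1) = X ^ (j : ℕ) := by
  simp [vecPoly_eq_linearCombination, Fintype.linearCombination_apply_single]

theorem vecPoly_rotMat_col {n : ℕ} {φ : ℂ[X]} (hmonic : φ.Monic) (hdeg : φ.natDegree = n)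
    (j : Fin n) :
    vecPoly n ((rotMat n φ).col j) =
      if (j : ℕ) + 1 < n then X ^ ((j : ℕ) + 1) else X ^ n - φ := by
  split_ifs with hj
  · simp only [vecPoly, rotMat, Matrix.col_apply, of_apply, if_pos hj, apply_ite C, map_one,
      map_zero, ite_mul, one_mul, zero_mul]
    rw [Finset.sum_eq_single ⟨_, hj⟩] <;> simp [Fin.ext_iff]
  · have hφ := hmonic.as_sum
    rw [hdeg, ← Fin.sum_univ_eq_sum_range (fun i => C (φ.coeff i) * X ^ i)] at hφ
    simp only [vecPoly, rotMat, Matrix.col_apply, of_apply, if_neg hj, map_neg, neg_mul,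
      Finset.sum_neg_distrib]
    linear_combination hφ

noncomputable def vecPolyMod (n : ℕ) (φ : ℂ[X]) : (Fin n → ℂ) →ₗ[ℂ] AdjoinRoot φ :=
  (mkₐ φ).toLinearMap ∘ₗ Fintype.linearCombination ℂ fun j : Fin n => (X : ℂ[X]) ^ (j : ℕ)

theorem vecPolyMod_apply (n : ℕ) (φ : ℂ[X]) (v : Fin n → ℂ) :
    vecPolyMod n φ v = mk φ (vecPoly n v) := by
  simp [vecPolyMod, vecPoly_eq_linearCombination]

theorem vecPolyMod_rotMat_mulVec {n : ℕ} {φ : ℂ[X]} (hmonic : φ.Monic) (hdeg : φ.natDegree = n)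
    (v : Fin n → ℂ) :
    vecPolyMod n φ (rotMat n φ *ᵥ v) = root φ * vecPolyMod n φ v := by
  suffices vecPolyMod n φ ∘ₗ toLin' (rotMat n φ) = LinearMap.mulLeft ℂ (root φ) ∘ₗ vecPolyMod n φ by
    simpa using LinearMap.congr_fun this v
  ext j
  simp only [LinearMap.comp_apply, LinearMap.coe_single, toLin'_apply, mulVec_single_one,
    LinearMap.mulLeft_apply, vecPolyMod_apply]
  rw [vecPoly_rotMat_col hmonic hdeg, vecPoly_single_one, ← mk_X, ← map_mul, ← pow_succ']
  split_ifs with hj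
  · simp
  · simp [show (j : ℕ) + 1 = n by omega]

theorem vecPolyMod_rotMat_pow_mulVec {n : ℕ} {φ : ℂ[X]} (hmonic : φ.Monic)
    (hdeg : φ.natDegree = n) (j : ℕ) (v : Fin n → ℂ) :
    vecPolyMod n φ ((rotMat n φ ^ j) *ᵥ v) = root φ ^ j * vecPolyMod n φ v := by
  induction j with
  | zero => simp
  | succ j ih =>
    rw [pow_succ', ← mulVec_mulVec, vecPolyMod_rotMat_mulVec hmonic hdeg, ih, pow_succ', mul_assoc]

theorem genIdealMat_first_columns_linearIndependent_general (n m : ℕ)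
    (φ : Polynomial ℂ) (hmonic : φ.Monic) (hdeg : φ.natDegree = n)
    (f : Fin n → ℂ)
    (r : ℕ) (hr : r = min m (n - (EuclideanDomain.gcd (vecPoly n f) φ).natDegree)) :
    LinearIndependent ℂ (fun j : Fin r => (rotMat n φ ^ (j : ℕ)).mulVec f) := by
  refine LinearIndependent.of_comp (vecPolyMod n φ) ?_
  have hcols : vecPolyMod n φ ∘ (fun j : Fin r => (rotMat n φ ^ (j : ℕ)).mulVec f) =
      fun j : Fin r => root φ ^ (j : ℕ) * mk φ (vecPoly n f) := by
    ext j
    simp [vecPolyMod_rotMat_pow_mulVec hmonic hdeg, vecPolyMod_apply]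
  rw [hcols]
  exact linearIndependent_root_pow_mul _ hmonic.ne_zero (by omega)

/-- If `d = deg gcd(f(x), φ(x))` and `r = min {m, n − d}` (with `r ≤ m`), then the first
`r` columns `f, Hf, …, H^{r-1}f` of `H*(f)_{n×m}` are linearly independent. -/
theorem genIdealMat_first_columns_linearIndependent (n m : ℕ) (hn : 0 < n)
    (φ : Polynomial ℂ) (hmonic : φ.Monic) (hdeg : φ.natDegree = n) (h0 : φ.coeff 0 ≠ 0)
    (hsqfree : Squarefree φ) (f : Fin n → ℂ)
    (r : ℕ) (hr : r = min m (n - (EuclideanDomain.gcd (vecPoly n f) φ).natDegree))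
    (hrm : r ≤ m) :
    LinearIndependent ℂ (fun j : Fin r => (rotMat n φ ^ (j : ℕ)).mulVec f) :=
  genIdealMat_first_columns_linearIndependent_general n m φ hmonic hdeg f r hr
end

section
/- Any r consecutive columns H^d f, H^{d+1} f, …, H^{d+r-1} f (for 0 ≤ d ≤ m−r) of the generalized ideal matrix H*(f)_{n×m} are linearly independent, where r = min{m, n − deg gcd(f(x), φ(x))}. -/
open Polynomial Matrix

lemma vecPoly_coeff (n : ℕ) (v : Fin n → ℂ) (k : ℕ) :
    (vecPoly n v).coeff k = if h : k < n then v ⟨k, h⟩ else 0 := by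
  unfold vecPoly
  rw [finset_sum_coeff]
  simp only [coeff_C_mul, coeff_X_pow, mul_ite, mul_one, mul_zero]
  split
  · next h =>
    rw [Finset.sum_eq_single (⟨k, h⟩ : Fin n)]
    · simp
    · intro b _ hb
      rw [if_neg]
      intro hbk
      exact hb (Fin.ext hbk.symm)
    · simp
  · next h =>
    apply Finset.sum_eq_zero
    intro j _
    rw [if_neg]
    omega

lemma vecPoly_degree_lt (n : ℕ) (v : Fin n → ℂ) : (vecPoly n v).degree < n := by
  rw [degree_lt_iff_coeff_zero]
  intro k hk
  rw [vecPoly_coeff, dif_neg]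
  exact_mod_cast not_lt.mpr (by exact_mod_cast hk)

noncomputable def vecPolyL (n : ℕ) : (Fin n → ℂ) →ₗ[ℂ] Polynomial ℂ where
  toFun := vecPoly n
  map_add' u v := by simp [vecPoly, add_mul, Finset.sum_add_distrib]
  map_smul' a v := by
    simp [vecPoly, Finset.smul_sum, Polynomial.smul_eq_C_mul, mul_assoc]

lemma rotMat_mulVec_apply (m : ℕ) (φ : Polynomial ℂ) (v : Fin (m+1) → ℂ) (i : Fin (m+1)) :
    (rotMat (m+1) φ).mulVec v i =
      (if h : 1 ≤ (i:ℕ) then v ⟨(i:ℕ)-1, by omega⟩ else 0) - φ.coeff i * v (Fin.last m) := by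
  simp only [Matrix.mulVec, dotProduct, rotMat, Matrix.of_apply]
  rw [Fin.sum_univ_castSucc]
  have hlast : ¬ ((Fin.last m : Fin (m+1)) : ℕ) + 1 < m + 1 := by simp
  rw [if_neg hlast]
  have hmain : ∀ j : Fin m,
      (if ((j.castSucc : Fin (m+1)) : ℕ) + 1 < m + 1 then
        (if (i:ℕ) = ((j.castSucc : Fin (m+1)) : ℕ) + 1 then (1:ℂ) else 0)
       else -φ.coeff (i:ℕ)) * v j.castSucc
      = (if (i:ℕ) = (j:ℕ) + 1 then (1:ℂ) else 0) * v j.castSucc := by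
    intro j
    rw [if_pos]
    · simp
    · simp only [Fin.coe_castSucc]; omega
  rw [Finset.sum_congr rfl fun j _ => hmain j]
  have hsum : (∑ j : Fin m, (if (i:ℕ) = (j:ℕ) + 1 then (1:ℂ) else 0) * v j.castSucc)
      = (if h : 1 ≤ (i:ℕ) then v ⟨(i:ℕ)-1, by omega⟩ else 0) := by
    split
    · next h =>
      have hi : (i:ℕ) - 1 < m := by omega
      rw [Finset.sum_eq_single (⟨(i:ℕ)-1, hi⟩ : Fin m)]
      · rw [if_pos (by simp only [Fin.val_mk]; omega), one_mul]
        exact congrArg v (Fin.ext (by simp))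
      · intro b _ hb
        rw [if_neg, zero_mul]
        intro hbk
        exact hb (Fin.ext (by simp only [Fin.val_mk]; omega))
      · simp
    · next h =>
      apply Finset.sum_eq_zero
      intro j _
      rw [if_neg (by omega), zero_mul]
  rw [hsum]
  ring

lemma rotMat_step (m : ℕ) (φ : Polynomial ℂ) (hmonic : φ.Monic)
    (hdeg : φ.natDegree = m + 1) (v : Fin (m+1) → ℂ) :
    vecPoly (m+1) ((rotMat (m+1) φ).mulVec v) =
      X * vecPoly (m+1) v - C (v (Fin.last m)) * φ := by
  apply Polynomial.ext
  intro k
  rw [vecPoly_coeff, coeff_sub, coeff_C_mul]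
  rcases k with _ | k
  · rw [dif_pos (Nat.succ_pos m), rotMat_mulVec_apply, mul_coeff_zero, coeff_X_zero, zero_mul]
    rw [dif_neg (by simp)]
    ring
  · rw [coeff_X_mul, vecPoly_coeff]
    by_cases hk : k + 1 < m + 1
    · rw [dif_pos hk, dif_pos (show k < m + 1 by omega), rotMat_mulVec_apply]
      simp only [Fin.val_mk]
      rw [dif_pos (by omega)]
      have he : (⟨k+1-1, by omega⟩ : Fin (m+1)) = ⟨k, by omega⟩ := Fin.ext (by simp)
      rw [he]
      ring
    · rw [dif_neg hk]
      by_cases hk2 : k = m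
      · subst hk2
        rw [dif_pos (by omega)]
        have h1 : φ.coeff (k+1) = 1 := by
          rw [← hdeg]; exact hmonic.coeff_natDegree
        rw [h1]
        have h2 : (⟨k, by omega⟩ : Fin (k+1)) = Fin.last k := rfl
        rw [h2]
        ring
      · rw [dif_neg (by omega)]
        have h1 : φ.coeff (k+1) = 0 := by
          apply coeff_eq_zero_of_natDegree_lt
          omega
        rw [h1]
        ring

lemma rotMat_pow_poly (m : ℕ) (φ : Polynomial ℂ) (hmonic : φ.Monic)
    (hdeg : φ.natDegree = m + 1) (v : Fin (m+1) → ℂ) (k : ℕ) :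
    ∃ q : Polynomial ℂ, vecPoly (m+1) ((rotMat (m+1) φ ^ k).mulVec v) =
      X ^ k * vecPoly (m+1) v - q * φ := by
  induction k with
  | zero => exact ⟨0, by simp [Matrix.one_mulVec]⟩
  | succ k ih =>
    obtain ⟨q, hq⟩ := ih
    refine ⟨X * q + C (((rotMat (m+1) φ ^ k).mulVec v) (Fin.last m)), ?_⟩
    rw [pow_succ', ← Matrix.mulVec_mulVec, rotMat_step m φ hmonic hdeg, hq]
    ring


/-- Any `r` consecutive columns `H^d f, …, H^{d+r-1} f` (for `0 ≤ d ≤ m − r`) of the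
generalized ideal matrix `H*(f)_{n×m}` are linearly independent, where
`r = min {m, n − deg gcd(f(x), φ(x))}`. -/
theorem genIdealMat_consecutive_columns_linearIndependent (n m : ℕ) (hn : 0 < n)
    (φ : Polynomial ℂ) (hmonic : φ.Monic) (hdeg : φ.natDegree = n) (h0 : φ.coeff 0 ≠ 0)
    (hsqfree : Squarefree φ) (f : Fin n → ℂ)
    (r : ℕ) (hr : r = min m (n - (EuclideanDomain.gcd (vecPoly n f) φ).natDegree))
    (d : ℕ) (hd : d + r ≤ m) :
    LinearIndependent ℂ (fun j : Fin r => (rotMat n φ ^ (d + (j : ℕ))).mulVec f) := by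
  by_cases hF : vecPoly n f = 0
  · rw [hF, EuclideanDomain.gcd_zero_left, hdeg] at hr
    simp only [Nat.sub_self, Nat.min_zero] at hr
    subst hr
    exact linearIndependent_empty_type
  · obtain ⟨N, rfl⟩ : ∃ N, n = N + 1 := ⟨n - 1, by omega⟩
    set F := vecPoly (N+1) f with hFdef
    set g := EuclideanDomain.gcd F φ with hgdef
    rw [Fintype.linearIndependent_iff]
    intro c hc
    choose q hq using fun j : Fin r => rotMat_pow_poly N φ hmonic hdeg f (d + (j:ℕ))
    have h2 : ∑ j : Fin r, c j • vecPoly (N+1) ((rotMat (N+1) φ ^ (d + (j:ℕ))).mulVec f) = 0 := by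
      have h := congrArg (vecPolyL (N+1)) hc
      simp only [map_sum, map_zero, _root_.map_smul] at h
      exact h
    have h4 : (X ^ d * vecPoly r c) * F = (∑ j : Fin r, c j • q j) * φ := by
      have hL : (X ^ d * vecPoly r c) * F
          = ∑ j : Fin r, c j • (X ^ (d + (j:ℕ)) * F) := by
        simp only [vecPoly, Finset.mul_sum, Finset.sum_mul]
        exact Finset.sum_congr rfl fun j _ => by
          rw [Polynomial.smul_eq_C_mul, pow_add]; ring
      have h3 : ∑ j : Fin r, (c j • (X ^ (d + (j:ℕ)) * F) - c j • (q j * φ)) = 0 := by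
        rw [← h2]
        exact Finset.sum_congr rfl fun j _ => by rw [hq j, smul_sub, hFdef]
      rw [Finset.sum_sub_distrib, sub_eq_zero] at h3
      rw [hL, h3, Finset.sum_mul]
      exact Finset.sum_congr rfl fun j _ => (smul_mul_assoc _ _ _).symm
    have hdvd : φ ∣ X ^ d * vecPoly r c * F := ⟨∑ j : Fin r, c j • q j, by rw [h4]; ring⟩
    have hφ0 : φ ≠ 0 := hmonic.ne_zero
    have hg0 : g ≠ 0 := fun h => hφ0 (EuclideanDomain.gcd_eq_zero_iff.mp h).2
    obtain ⟨a, ha⟩ : g ∣ φ := EuclideanDomain.gcd_dvd_right _ _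
    obtain ⟨b, hb⟩ : g ∣ F := EuclideanDomain.gcd_dvd_left _ _
    have ha0 : a ≠ 0 := by rintro rfl; rw [mul_zero] at ha; exact hφ0 ha
    have hbez := EuclideanDomain.gcd_eq_gcd_ab F φ
    have hco : IsCoprime a b := by
      refine ⟨EuclideanDomain.gcdB F φ, EuclideanDomain.gcdA F φ, ?_⟩
      have hg1 : g * (EuclideanDomain.gcdB F φ * a + EuclideanDomain.gcdA F φ * b) = g * 1 := by
        rw [mul_one]
        linear_combination (-1 : Polynomial ℂ) * hbez
          - EuclideanDomain.gcdB F φ * ha - EuclideanDomain.gcdA F φ * hb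
      exact mul_left_cancel₀ hg0 hg1
    have haφ : a ∣ φ := ⟨g, by rw [ha]; ring⟩
    have hXa : IsCoprime a X :=
      ((Polynomial.irreducible_X).coprime_iff_not_dvd.mpr
        (fun h => h0 (Polynomial.X_dvd_iff.mp (h.trans haφ)))).symm
    have hacb : a ∣ vecPoly r c := by
      have h5 : φ ∣ g * (vecPoly r c * (X ^ d * b)) := by
        rw [show g * (vecPoly r c * (X ^ d * b)) = X ^ d * vecPoly r c * (g * b) by ring, ← hb]
        exact hdvd
      rw [ha] at h5
      have h6 : a ∣ vecPoly r c * (X ^ d * b) := (mul_dvd_mul_iff_left hg0).mp h5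
      exact ((hXa.pow_right).mul_right hco).dvd_of_dvd_mul_right h6
    have hdegs : N + 1 = g.natDegree + a.natDegree := by
      rw [← hdeg, ha, natDegree_mul hg0 ha0]
    have hra : r ≤ a.natDegree := by
      rw [hr]; omega
    have hlt : (vecPoly r c).degree < a.degree := by
      calc (vecPoly r c).degree < (r : ℕ) := vecPoly_degree_lt r c
        _ ≤ ((a.natDegree : ℕ) : WithBot ℕ) := by exact_mod_cast hra
        _ = a.degree := (degree_eq_natDegree ha0).symm
    have hcz : vecPoly r c = 0 := eq_zero_of_dvd_of_degree_lt hacb hlt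
    intro j
    have hcj := vecPoly_coeff r c (j : ℕ)
    rw [hcz, coeff_zero, dif_pos j.isLt] at hcj
    simpa using hcj.symm
end

section
/- The generalized ideal matrix H*(Hf)_{n×m} has the same rank r = min{m, n − deg gcd(f(x), φ(x))} as H*(f)_{n×m}, and its first r columns are linearly independent. -/
open Polynomial Matrix

noncomputable def rbasis (n : ℕ) (φ : Polynomial ℂ) (hφ : φ ≠ 0) (hdeg : φ.natDegree = n) :
    Module.Basis (Fin n) ℂ (AdjoinRoot φ) :=
  (AdjoinRoot.powerBasis hφ).basis.reindex (finCongr (by simp [hdeg]))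

lemma rbasis_apply (n : ℕ) (φ : Polynomial ℂ) (hφ : φ ≠ 0) (hdeg : φ.natDegree = n)
    (i : Fin n) : rbasis n φ hφ hdeg i = AdjoinRoot.root φ ^ (i : ℕ) := by
  rw [rbasis, Module.Basis.reindex_apply]
  exact ((AdjoinRoot.powerBasis hφ).basis_eq_pow _).trans (by simp)


section
variable (n : ℕ) (φ : Polynomial ℂ) (hφ : φ ≠ 0) (hdeg : φ.natDegree = n)

noncomputable def evec : (Fin n → ℂ) ≃ₗ[ℂ] AdjoinRoot φ :=
  (rbasis n φ hφ hdeg).equivFun.symm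

lemma evec_apply (v : Fin n → ℂ) :
    evec n φ hφ hdeg v = ∑ i : Fin n, v i • AdjoinRoot.root φ ^ (i : ℕ) := by
  rw [evec, Module.Basis.equivFun_symm_apply]
  exact Finset.sum_congr rfl fun i _ => by rw [rbasis_apply]

include hdeg in
lemma col_sum (hmonic : φ.Monic) (j : Fin n) :
    (∑ i : Fin n, rotMat n φ i j • AdjoinRoot.root φ ^ (i : ℕ))
      = AdjoinRoot.root φ ^ ((j : ℕ) + 1) := by
  by_cases h : (j : ℕ) + 1 < n
  · rw [Finset.sum_eq_single (⟨(j : ℕ) + 1, h⟩ : Fin n)]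
    · simp [rotMat, h]
    · intro b _ hb
      have : (b : ℕ) ≠ (j : ℕ) + 1 := fun hc => hb (Fin.ext hc)
      simp [rotMat, h, this]
    · simp
  · -- j = n - 1, column is -coeffs
    have hj : (j : ℕ) + 1 = n := Nat.le_antisymm j.2 (not_lt.mp h)
    have haev : (Polynomial.aeval (AdjoinRoot.root φ)) φ = 0 := by
      rw [AdjoinRoot.aeval_eq, AdjoinRoot.mk_self]
    rw [Polynomial.aeval_eq_sum_range, hdeg, Finset.sum_range_succ] at haev
    have hcn : φ.coeff n = 1 := by
      have := hmonic.coeff_natDegree; rwa [hdeg] at this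
    rw [hcn, one_smul] at haev
    have hsum : (∑ i ∈ Finset.range n, φ.coeff i • AdjoinRoot.root φ ^ i)
        = ∑ i : Fin n, φ.coeff (i : ℕ) • AdjoinRoot.root φ ^ (i : ℕ) :=
      (Fin.sum_univ_eq_sum_range _ n).symm
    have key : (∑ i : Fin n, φ.coeff (i : ℕ) • AdjoinRoot.root φ ^ (i : ℕ))
        = -(AdjoinRoot.root φ ^ n) := by
      rw [← hsum, eq_neg_iff_add_eq_zero]; exact haev
    calc (∑ i : Fin n, rotMat n φ i j • AdjoinRoot.root φ ^ (i : ℕ))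
        = -(∑ i : Fin n, φ.coeff (i : ℕ) • AdjoinRoot.root φ ^ (i : ℕ)) := by
          rw [← Finset.sum_neg_distrib]
          exact Finset.sum_congr rfl fun i _ => by simp [rotMat, h]
      _ = AdjoinRoot.root φ ^ ((j : ℕ) + 1) := by rw [key, neg_neg, hj]

lemma evec_mulVec (hmonic : φ.Monic) (v : Fin n → ℂ) :
    evec n φ hφ hdeg ((rotMat n φ).mulVec v) = AdjoinRoot.root φ * evec n φ hφ hdeg v := by
  rw [evec_apply, evec_apply, Finset.mul_sum]
  simp only [Matrix.mulVec, dotProduct]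
  calc (∑ i : Fin n, (∑ j : Fin n, rotMat n φ i j * v j) • AdjoinRoot.root φ ^ (i : ℕ))
      = ∑ i : Fin n, ∑ j : Fin n, (rotMat n φ i j * v j) • AdjoinRoot.root φ ^ (i : ℕ) := by
        simp [Finset.sum_smul]
    _ = ∑ j : Fin n, ∑ i : Fin n, (rotMat n φ i j * v j) • AdjoinRoot.root φ ^ (i : ℕ) :=
        Finset.sum_comm
    _ = ∑ j : Fin n, v j • ∑ i : Fin n, rotMat n φ i j • AdjoinRoot.root φ ^ (i : ℕ) := by
        refine Finset.sum_congr rfl fun j _ => ?_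
        rw [Finset.smul_sum]
        refine Finset.sum_congr rfl fun i _ => ?_
        rw [mul_comm, mul_smul]
    _ = ∑ j : Fin n, AdjoinRoot.root φ * (v j • AdjoinRoot.root φ ^ (j : ℕ)) := by
        refine Finset.sum_congr rfl fun j _ => ?_
        rw [col_sum n φ hdeg hmonic, pow_succ, mul_comm (AdjoinRoot.root φ ^ (j:ℕ)),
          mul_smul_comm]
end


section
variable (n : ℕ) (φ : Polynomial ℂ) (hφ : φ ≠ 0) (hdeg : φ.natDegree = n)

lemma evec_pow_mulVec (hmonic : φ.Monic) (k : ℕ) (v : Fin n → ℂ) :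
    evec n φ hφ hdeg ((rotMat n φ ^ k).mulVec v)
      = AdjoinRoot.root φ ^ k * evec n φ hφ hdeg v := by
  induction k generalizing v with
  | zero => simp
  | succ k ih =>
    rw [pow_succ, ← Matrix.mulVec_mulVec, ih (rotMat n φ *ᵥ v),
      evec_mulVec n φ hφ hdeg hmonic, pow_succ]
    ring

lemma evec_eq_mk (f : Fin n → ℂ) :
    evec n φ hφ hdeg f = AdjoinRoot.mk φ (vecPoly n f) := by
  rw [evec_apply, vecPoly, map_sum]
  refine Finset.sum_congr rfl fun j _ => ?_
  rw [_root_.map_mul, map_pow, AdjoinRoot.mk_X, AdjoinRoot.mk_C, Algebra.smul_def,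
    AdjoinRoot.algebraMap_eq]
end

section Poly
variable {n : ℕ} {φ p : Polynomial ℂ}

/-- helper: a polynomial of degree < N equals the sum of its first N monomials -/
lemma sum_C_coeff_eq {q : Polynomial ℂ} {N : ℕ} (h : q.degree < (N : ℕ)) :
    ∑ i ∈ Finset.range N, Polynomial.C (q.coeff i) * Polynomial.X ^ i = q := by
  rcases eq_or_ne q 0 with rfl | hq
  · simp
  · have hnd : q.natDegree < N := (Polynomial.natDegree_lt_iff_degree_lt hq).mpr h
    conv_rhs => rw [Polynomial.as_sum_range' q N hnd]
    exact Finset.sum_congr rfl fun i _ => Polynomial.C_mul_X_pow_eq_monomial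

/-- Bezout-style coprimality after dividing by the gcd. -/
lemma coprime_parts (hφ : φ ≠ 0) (p₁ ψ' : Polynomial ℂ)
    (hp : p = EuclideanDomain.gcd p φ * p₁) (hψ : φ = EuclideanDomain.gcd p φ * ψ') :
    IsCoprime ψ' p₁ := by
  have hg0 : EuclideanDomain.gcd p φ ≠ 0 := fun hc =>
    hφ (EuclideanDomain.gcd_eq_zero_iff.mp hc).2
  have hbez := EuclideanDomain.gcd_eq_gcd_ab p φ
  set g := EuclideanDomain.gcd p φ
  set A := EuclideanDomain.gcdA p φ
  set B := EuclideanDomain.gcdB p φ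
  refine ⟨B, A, ?_⟩
  have : g * 1 = g * (B * ψ' + A * p₁) := by
    rw [mul_one]
    calc g = p * A + φ * B := hbez
      _ = g * (B * ψ' + A * p₁) := by rw [hp, hψ]; ring
  exact (mul_left_cancel₀ hg0 this).symm

end Poly

section Core
variable {n : ℕ} {φ : Polynomial ℂ}

lemma psi_facts (hφ : φ ≠ 0) (hdeg : φ.natDegree = n) (p : Polynomial ℂ) :
    ∃ ψ' p₁ : Polynomial ℂ, φ = EuclideanDomain.gcd p φ * ψ' ∧
      p = EuclideanDomain.gcd p φ * p₁ ∧ ψ' ≠ 0 ∧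
      ψ'.natDegree = n - (EuclideanDomain.gcd p φ).natDegree ∧
      (EuclideanDomain.gcd p φ).natDegree ≤ n := by
  set g := EuclideanDomain.gcd p φ with hgdef
  have hg0 : g ≠ 0 := fun hc =>
    hφ (EuclideanDomain.gcd_eq_zero_iff.mp hc).2
  obtain ⟨ψ', hψ⟩ := EuclideanDomain.gcd_dvd_right p φ
  obtain ⟨p₁, hp⟩ := EuclideanDomain.gcd_dvd_left p φ
  have hψ0 : ψ' ≠ 0 := by rintro rfl; rw [mul_zero] at hψ; exact hφ hψ
  have hnd : n = g.natDegree + ψ'.natDegree := by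
    rw [← hdeg, hψ, Polynomial.natDegree_mul hg0 hψ0]
  exact ⟨ψ', p₁, hψ, hp, hψ0, by omega, by omega⟩

lemma key_vanish (hmonic : φ.Monic) (hdeg : φ.natDegree = n) (h0 : φ.coeff 0 ≠ 0)
    (p q : Polynomial ℂ)
    (hq : q.degree < ((n - (EuclideanDomain.gcd p φ).natDegree : ℕ) : WithBot ℕ))
    (hdvd : φ ∣ q * (Polynomial.X * p)) : q = 0 := by
  have hφ : φ ≠ 0 := hmonic.ne_zero
  obtain ⟨ψ', p₁, hψ, hp, hψ0, hψdeg, -⟩ := psi_facts hφ hdeg p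
  set g := EuclideanDomain.gcd p φ with hgdef
  have hg0 : g ≠ 0 := fun hc =>
    hφ (EuclideanDomain.gcd_eq_zero_iff.mp hc).2
  have hcop : IsCoprime ψ' p₁ := coprime_parts hφ p₁ ψ' hp hψ
  have hcopX : IsCoprime ψ' Polynomial.X := by
    rw [isCoprime_comm]
    refine Polynomial.irreducible_X.coprime_iff_not_dvd.mpr fun hdvdX => ?_
    have : ψ'.coeff 0 = 0 := Polynomial.X_dvd_iff.mp hdvdX
    apply h0
    rw [hψ, Polynomial.mul_coeff_zero, this, mul_zero]
  have hψdvd : ψ' ∣ q * (Polynomial.X * p₁) := by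
    have h1 : q * (Polynomial.X * p) = g * (q * (Polynomial.X * p₁)) := by
      conv_lhs => rw [hp]
      ring
    rw [hψ, h1] at hdvd
    exact (mul_dvd_mul_iff_left hg0).mp hdvd
  have hψq : ψ' ∣ q := (hcopX.mul_right hcop).dvd_of_dvd_mul_right hψdvd
  by_contra hq0
  have := Polynomial.degree_le_of_dvd hψq hq0
  rw [Polynomial.degree_eq_natDegree hψ0, hψdeg] at this
  exact absurd (lt_of_le_of_lt this hq) (lt_irrefl _)

lemma key_rel (hmonic : φ.Monic) (hdeg : φ.natDegree = n) (p : Polynomial ℂ) :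
    ∃ q₀ : Polynomial ℂ,
      q₀.degree < ((n - (EuclideanDomain.gcd p φ).natDegree : ℕ) : WithBot ℕ) ∧
      φ ∣ (Polynomial.X ^ (n - (EuclideanDomain.gcd p φ).natDegree) - q₀) * p := by
  have hφ : φ ≠ 0 := hmonic.ne_zero
  obtain ⟨ψ', p₁, hψ, hp, hψ0, hψdeg, -⟩ := psi_facts hφ hdeg p
  set g := EuclideanDomain.gcd p φ with hgdef
  set k := n - g.natDegree with hk
  set ψm := ψ' * Polynomial.C ψ'.leadingCoeff⁻¹ with hψm
  have hmon : ψm.Monic := Polynomial.monic_mul_leadingCoeff_inv hψ0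
  have hdegm : ψm.degree = (k : WithBot ℕ) := by
    rw [hψm, Polynomial.degree_mul_C (inv_ne_zero (Polynomial.leadingCoeff_ne_zero.mpr hψ0)),
      Polynomial.degree_eq_natDegree hψ0, hψdeg]
  refine ⟨Polynomial.X ^ k - ψm, ?_, ?_⟩
  · have : (Polynomial.X ^ k - ψm).degree < (Polynomial.X ^ k : Polynomial ℂ).degree := by
      refine Polynomial.degree_sub_lt ?_ (pow_ne_zero k Polynomial.X_ne_zero) ?_
      · rw [Polynomial.degree_X_pow, hdegm]
      · rw [(Polynomial.monic_X_pow k).leadingCoeff, hmon.leadingCoeff]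
    rwa [Polynomial.degree_X_pow] at this
  · rw [sub_sub_cancel]
    exact ⟨Polynomial.C ψ'.leadingCoeff⁻¹ * p₁, by rw [hψm, hp, hψ]; ring⟩

lemma coeff_fin_sum (r : ℕ) (c : Fin r → ℂ) (j : Fin r) :
    (∑ i : Fin r, Polynomial.C (c i) * Polynomial.X ^ (i : ℕ)).coeff (j : ℕ) = c j := by
  rw [Polynomial.finset_sum_coeff, Finset.sum_eq_single j]
  · simp
  · intro b _ hb
    have : (j : ℕ) ≠ (b : ℕ) := fun hc => hb (Fin.ext hc.symm)
    simp [Polynomial.coeff_C_mul, Polynomial.coeff_X_pow, this]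
  · simp

lemma degree_fin_sum_lt (r : ℕ) (c : Fin r → ℂ) :
    (∑ i : Fin r, Polynomial.C (c i) * Polynomial.X ^ (i : ℕ)).degree < (r : WithBot ℕ) := by
  refine lt_of_le_of_lt (Polynomial.degree_sum_le _ _) ?_
  refine (Finset.sup_lt_iff (WithBot.bot_lt_coe r)).mpr fun i _ =>
    lt_of_le_of_lt (Polynomial.degree_C_mul_X_pow_le _ _) (Nat.cast_lt.mpr i.2)

lemma mk_pow_mul (t k : ℕ) (p : Polynomial ℂ) :
    AdjoinRoot.mk φ (Polynomial.X ^ (t + k) * p)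
      = AdjoinRoot.root φ ^ t * AdjoinRoot.mk φ (Polynomial.X ^ k * p) := by
  rw [← AdjoinRoot.mk_X, ← map_pow, ← _root_.map_mul]
  congr 1
  ring

lemma indep_family (hmonic : φ.Monic) (hdeg : φ.natDegree = n) (h0 : φ.coeff 0 ≠ 0)
    (p : Polynomial ℂ) (r : ℕ) (hrd : r ≤ n - (EuclideanDomain.gcd p φ).natDegree) :
    LinearIndependent ℂ
      (fun j : Fin r => AdjoinRoot.mk φ (Polynomial.X ^ ((j : ℕ) + 1) * p)) := by
  rw [Fintype.linearIndependent_iff]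
  intro c hc j
  set q := ∑ i : Fin r, Polynomial.C (c i) * Polynomial.X ^ (i : ℕ) with hqdef
  have hmkq : AdjoinRoot.mk φ (q * (Polynomial.X * p)) = 0 := by
    rw [hqdef, Finset.sum_mul, map_sum]
    refine (Finset.sum_congr rfl fun i _ => ?_).trans hc
    rw [AdjoinRoot.smul_mk, Polynomial.smul_eq_C_mul]
    congr 1
    ring
  have hdvd : φ ∣ q * (Polynomial.X * p) := AdjoinRoot.mk_eq_zero.mp hmkq
  have hqdeg : q.degree < ((n - (EuclideanDomain.gcd p φ).natDegree : ℕ) : WithBot ℕ) :=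
    lt_of_lt_of_le (degree_fin_sum_lt r c) (Nat.cast_le.mpr hrd)
  have hq0 : q = 0 := key_vanish hmonic hdeg h0 p q hqdeg hdvd
  have := coeff_fin_sum r c j
  rw [← hqdef, hq0] at this
  simpa using this.symm

end Core



/-- The generalized ideal matrix `H*(Hf)_{n×m}` has the same rank
`r = min {m, n − deg gcd(f(x), φ(x))}` as `H*(f)_{n×m}`, and its first `r` columns
are linearly independent. -/
theorem genIdealMat_shift_rank_and_linearIndependent (n m : ℕ) (hn : 0 < n)
    (φ : Polynomial ℂ) (hmonic : φ.Monic) (hdeg : φ.natDegree = n) (h0 : φ.coeff 0 ≠ 0)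
    (hsqfree : Squarefree φ) (f : Fin n → ℂ)
    (r : ℕ) (hr : r = min m (n - (EuclideanDomain.gcd (vecPoly n f) φ).natDegree)) :
    (genIdealMat n m (rotMat n φ) ((rotMat n φ).mulVec f)).rank = r ∧
      LinearIndependent ℂ
        (fun j : Fin r => (rotMat n φ ^ (j : ℕ)).mulVec ((rotMat n φ).mulVec f)) := by
  have hφ : φ ≠ 0 := hmonic.ne_zero
  set p := vecPoly n f with hp
  set d := (EuclideanDomain.gcd p φ).natDegree with hd
  set e := evec n φ hφ hdeg with he
  set H := rotMat n φ with hH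
  have hcol : ∀ j : ℕ, e ((H ^ j).mulVec (H.mulVec f))
      = AdjoinRoot.mk φ (Polynomial.X ^ (j + 1) * p) := by
    intro j
    rw [he, evec_pow_mulVec n φ hφ hdeg hmonic, evec_mulVec n φ hφ hdeg hmonic,
      evec_eq_mk, ← AdjoinRoot.mk_X, ← map_pow, ← _root_.map_mul, ← _root_.map_mul]
    congr 1
    ring
  have hrm : r ≤ m := hr ▸ min_le_left _ _
  have hrd : r ≤ n - d := hr ▸ min_le_right _ _
  have hror : r = m ∨ r = n - d := by rw [hr]; exact min_choice _ _
  have hG : LinearIndependent ℂ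
      (fun j : Fin r => AdjoinRoot.mk φ (Polynomial.X ^ ((j : ℕ) + 1) * p)) :=
    indep_family hmonic hdeg h0 p r hrd
  have hFr : LinearIndependent ℂ
      (fun j : Fin r => (H ^ (j : ℕ)).mulVec (H.mulVec f)) := by
    have h2 := hG.map' e.symm.toLinearMap e.symm.ker
    simp only [LinearEquiv.coe_coe] at h2
    have h3 : (⇑e.symm ∘ fun j : Fin r =>
        AdjoinRoot.mk φ (Polynomial.X ^ ((j : ℕ) + 1) * p))
        = fun j : Fin r => (H ^ (j : ℕ)).mulVec (H.mulVec f) :=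
      funext fun j => by
        simp only [Function.comp_apply, ← hcol (j : ℕ), LinearEquiv.symm_apply_apply]
    rwa [h3] at h2
  refine ⟨?_, hFr⟩
  -- rank computation
  obtain ⟨q₀, hq₀deg, hq₀dvd⟩ := key_rel hmonic hdeg p
  have hrel : ∀ t : ℕ, AdjoinRoot.mk φ (Polynomial.X ^ (t + (n - d)) * p)
      = ∑ i ∈ Finset.range (n - d),
          q₀.coeff i • AdjoinRoot.mk φ (Polynomial.X ^ (t + i) * p) := by
    intro t
    have h1 : AdjoinRoot.mk φ (Polynomial.X ^ (n - d) * p)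
        = AdjoinRoot.mk φ (q₀ * p) := by
      have h0' : AdjoinRoot.mk φ ((Polynomial.X ^ (n - d) - q₀) * p) = 0 :=
        AdjoinRoot.mk_eq_zero.mpr hq₀dvd
      rw [sub_mul, map_sub, sub_eq_zero] at h0'
      exact h0'
    have h2 : AdjoinRoot.mk φ (q₀ * p)
        = ∑ i ∈ Finset.range (n - d),
            q₀.coeff i • AdjoinRoot.mk φ (Polynomial.X ^ i * p) := by
      conv_lhs => rw [← sum_C_coeff_eq hq₀deg]
      rw [Finset.sum_mul, map_sum]
      refine Finset.sum_congr rfl fun i _ => ?_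
      rw [AdjoinRoot.smul_mk, Polynomial.smul_eq_C_mul]
      congr 1
      ring
    rw [mk_pow_mul t (n - d) p, h1, h2, Finset.mul_sum]
    refine Finset.sum_congr rfl fun i _ => ?_
    rw [mul_smul_comm, ← mk_pow_mul t i p]
  set G : Fin r → AdjoinRoot φ :=
    fun j => AdjoinRoot.mk φ (Polynomial.X ^ ((j : ℕ) + 1) * p) with hGdef
  set S := Submodule.span ℂ (Set.range G) with hS
  have claim : ∀ k : ℕ, 1 ≤ k → (k ≤ r ∨ r = n - d)
      → AdjoinRoot.mk φ (Polynomial.X ^ k * p) ∈ S := by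
    intro k
    induction k using Nat.strong_induction_on with
    | _ k ih =>
      intro hk1 hkr
      by_cases hkr' : k ≤ r
      · have hk' : k - 1 + 1 = k := by omega
        refine Submodule.subset_span ⟨⟨k - 1, by omega⟩, ?_⟩
        show AdjoinRoot.mk φ (Polynomial.X ^ ((k - 1) + 1) * p)
          = AdjoinRoot.mk φ (Polynomial.X ^ k * p)
        rw [hk']
      · have hrd' : r = n - d := by tauto
        push_neg at hkr'
        have hrel' := hrel (k - (n - d))
        rw [show k - (n - d) + (n - d) = k by omega] at hrel'
        rw [hrel']
        refine Submodule.sum_mem _ fun i hi => Submodule.smul_mem _ _ ?_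
        have hi' : i < n - d := Finset.mem_range.mp hi
        exact ih (k - (n - d) + i) (by omega) (by omega) (Or.inr hrd')
  have hspan_eq : Submodule.span ℂ (Set.range
      (fun j : Fin m => AdjoinRoot.mk φ (Polynomial.X ^ ((j : ℕ) + 1) * p))) = S := by
    apply le_antisymm
    · rw [Submodule.span_le]
      rintro x ⟨j, rfl⟩
      refine claim ((j : ℕ) + 1) (by omega) ?_
      rcases hror with h | h
      · left; have := j.2; omega
      · right; exact h
    · rw [hS, Submodule.span_le]
      rintro x ⟨j, rfl⟩
      exact Submodule.subset_span ⟨⟨(j : ℕ), by omega⟩, rfl⟩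
  rw [Matrix.rank_eq_finrank_span_cols]
  have htrans : Set.range (genIdealMat n m H (H.mulVec f)).col
      = Set.range (fun j : Fin m => (H ^ (j : ℕ)).mulVec (H.mulVec f)) := by
    congr 1
  have hmapspan : (Submodule.span ℂ (Set.range
        (fun j : Fin m => (H ^ (j : ℕ)).mulVec (H.mulVec f)))).map e.toLinearMap
      = Submodule.span ℂ (Set.range
        (fun j : Fin m => AdjoinRoot.mk φ (Polynomial.X ^ ((j : ℕ) + 1) * p))) := by
    have hfun : (⇑e ∘ fun j : Fin m => (H ^ (j : ℕ)).mulVec (H.mulVec f))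
        = fun j : Fin m => AdjoinRoot.mk φ (Polynomial.X ^ ((j : ℕ) + 1) * p) :=
      funext fun j => hcol (j : ℕ)
    rw [Submodule.map_span, ← Set.range_comp]
    simp only [LinearEquiv.coe_coe]
    rw [hfun]
  rw [htrans, ← LinearEquiv.finrank_map_eq e, hmapspan, hspan_eq, hS,
    finrank_span_eq_card hG, Fintype.card_fin]
end

section
/- Let d = deg( gcd(f₁,φ₁)·gcd(f₂,φ₂)·φ₃ / gcd(f₁·f₂, φ₃) ) where φ₃ = gcd(φ₁,φ₂), and r = min{m, n₁+n₂−d}. Then the rank of the double ideal matrix H*_{φ₁,φ₂}(f₁,f₂)_{(n₁+n₂)×m} equals r. -/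
open Polynomial Matrix

/-- The `(n₁+n₂) × m` double ideal matrix, stacking `[f₁, H₁f₁, …, H₁^{m-1}f₁]`
on top of `[f₂, H₂f₂, …, H₂^{m-1}f₂]`. -/
noncomputable def dblIdealMat (n₁ n₂ m : ℕ) (H₁ : Matrix (Fin n₁) (Fin n₁) ℂ)
    (H₂ : Matrix (Fin n₂) (Fin n₂) ℂ) (f₁ : Fin n₁ → ℂ) (f₂ : Fin n₂ → ℂ) :
    Matrix (Fin n₁ ⊕ Fin n₂) (Fin m) ℂ :=
  Matrix.of fun i j =>
    Sum.elim ((H₁ ^ (j : ℕ)).mulVec f₁) ((H₂ ^ (j : ℕ)).mulVec f₂) i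

lemma vecPoly_coeff_s10 (n : ℕ) (f : Fin n → ℂ) (i : Fin n) :
    (vecPoly n f).coeff (i : ℕ) = f i := by
  rw [vecPoly, finset_sum_coeff]
  simp only [coeff_C_mul, coeff_X_pow]
  rw [Finset.sum_eq_single i]
  · simp
  · intro j _ hj
    have : (i : ℕ) ≠ (j : ℕ) := fun h => hj (Fin.ext h.symm)
    simp [this]
  · simp

lemma vecPoly_mem (n : ℕ) (f : Fin n → ℂ) : vecPoly n f ∈ degreeLT ℂ n := by
  apply Submodule.sum_mem
  intro j _
  exact mem_degreeLT.2 (lt_of_le_of_lt (degree_C_mul_X_pow_le _ _) (Nat.cast_lt.mpr j.isLt))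

lemma rot_step {n : ℕ} {φ : Polynomial ℂ} (hm : φ.Monic) (hdφ : φ.natDegree = n)
    (r : Polynomial ℂ) (hr : r.degree < (n : WithBot ℕ)) :
    (rotMat n φ).mulVec (fun i => r.coeff (i : ℕ)) =
      fun i : Fin n => ((X * r) %ₘ φ).coeff (i : ℕ) := by
  cases n with
  | zero => funext i; exact i.elim0
  | succ k =>
    have hdeg : φ.degree = ((k+1 : ℕ) : WithBot ℕ) := by
      rw [degree_eq_natDegree hm.ne_zero, hdφ]
    have hrc : ∀ l : ℕ, k + 1 ≤ l → r.coeff l = 0 := by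
      intro l hl
      exact coeff_eq_zero_of_degree_lt (lt_of_lt_of_le hr (by exact_mod_cast hl))
    have hφtop : φ.coeff (k+1) = 1 := hdφ ▸ hm.coeff_natDegree
    have key : (X * r) %ₘ φ = X * r - C (r.coeff k) * φ := by
      have h1 : φ ∣ (X * r) - (X * r - C (r.coeff k) * φ) := ⟨C (r.coeff k), by ring⟩
      rw [modByMonic_eq_of_dvd_sub hm h1, (modByMonic_eq_self_iff hm).2]
      rw [hdeg, degree_lt_iff_coeff_zero]
      intro l hl
      have hl' : k + 1 ≤ l := by exact_mod_cast hl
      rcases Nat.lt_or_ge (k+1) l with h | h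
      · obtain ⟨l', rfl⟩ : ∃ l', l = l' + 1 := ⟨l - 1, by omega⟩
        simp only [coeff_sub, coeff_X_mul, coeff_C_mul]
        rw [hrc l' (by omega),
          coeff_eq_zero_of_natDegree_lt (by omega : φ.natDegree < l' + 1)]
        ring
      · have : l = k + 1 := by omega
        subst this
        simp only [coeff_sub, coeff_X_mul, coeff_C_mul, hφtop]
        ring
    rw [key]
    funext i
    have lhs : (rotMat (k+1) φ).mulVec (fun i => r.coeff (i : ℕ)) i =
        (∑ j : Fin k, (if (i : ℕ) = (j : ℕ) + 1 then (1:ℂ) else 0) * r.coeff (j : ℕ))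
          + (-φ.coeff (i : ℕ)) * r.coeff k := by
      simp only [Matrix.mulVec, dotProduct, rotMat, Matrix.of_apply]
      rw [Fin.sum_univ_castSucc]
      congr 1
      · apply Finset.sum_congr rfl
        intro j _
        have : (j.castSucc : ℕ) + 1 < k + 1 := by simpa using j.isLt
        rw [if_pos this]
        simp [Fin.coe_castSucc]
      · rw [if_neg (by simp)]
        simp
    rw [lhs]
    induction i using Fin.cases with
    | zero =>
      have : ∀ j : Fin k, (if ((0 : Fin (k+1)) : ℕ) = (j : ℕ) + 1 then (1:ℂ) else 0) = 0 := by
        intro j; rw [if_neg]; simp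
      simp only [this, zero_mul, Finset.sum_const_zero, zero_add]
      simp [coeff_X_mul_zero]
      ring
    | succ i₀ =>
      have hsum : (∑ j : Fin k, (if ((i₀.succ : Fin (k+1)) : ℕ) = (j : ℕ) + 1 then (1:ℂ) else 0) * r.coeff (j : ℕ))
          = r.coeff (i₀ : ℕ) := by
        rw [Finset.sum_eq_single i₀]
        · simp
        · intro j _ hj
          rw [if_neg, zero_mul]
          simp only [Fin.val_succ]
          intro h
          exact hj (Fin.ext (by omega))
        · simp
      rw [hsum]
      simp only [coeff_sub, coeff_C_mul, Fin.val_succ, coeff_X_mul]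
      ring

lemma rot_pow_mulVec {n : ℕ} {φ : Polynomial ℂ} (hm : φ.Monic) (hdφ : φ.natDegree = n)
    (f : Fin n → ℂ) (j : ℕ) :
    ((rotMat n φ) ^ j).mulVec f =
      fun i : Fin n => ((X ^ j * vecPoly n f) %ₘ φ).coeff (i : ℕ) := by
  have hdeg : φ.degree = (n : WithBot ℕ) := by
    rw [degree_eq_natDegree hm.ne_zero, hdφ]
  induction j with
  | zero =>
    rw [pow_zero, Matrix.one_mulVec, pow_zero, one_mul,
      (modByMonic_eq_self_iff hm).2 (by rw [hdeg]; exact mem_degreeLT.1 (vecPoly_mem n f))]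
    funext i
    exact (vecPoly_coeff_s10 n f i).symm
  | succ j ih =>
    rw [pow_succ', ← Matrix.mulVec_mulVec, ih,
      rot_step hm hdφ _ (hdeg ▸ degree_modByMonic_lt _ hm)]
    funext i
    congr 1
    apply modByMonic_eq_of_dvd_sub hm
    have h := modByMonic_add_div (X ^ j * vecPoly n f) φ
    refine ⟨-(X * ((X ^ j * vecPoly n f) /ₘ φ)), ?_⟩
    have : X ^ (j+1) * vecPoly n f = X * (X ^ j * vecPoly n f) := by ring
    rw [this]
    linear_combination X * h


lemma dvd_step {φ F : Polynomial ℂ} (hφ : φ ≠ 0) (hsq : Squarefree φ) (p : Polynomial ℂ) :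
    φ ∣ p * F ↔ (φ / EuclideanDomain.gcd F φ) ∣ p := by
  set g := EuclideanDomain.gcd F φ with hg
  have hg0 : g ≠ 0 := fun h => hφ (EuclideanDomain.gcd_eq_zero_iff.1 h).2
  have hgφ : g ∣ φ := EuclideanDomain.gcd_dvd_right F φ
  have hgF : g ∣ F := EuclideanDomain.gcd_dvd_left F φ
  obtain ⟨F', hF'⟩ := hgF
  have hq : g * (φ / g) = φ := EuclideanDomain.mul_div_cancel' hg0 hgφ
  set q := φ / g with hqdef
  constructor
  · intro hdvd
    have h1 : g * q ∣ g * (p * F') := by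
      rw [hq]
      calc φ ∣ p * F := hdvd
        _ = g * (p * F') := by rw [hF']; ring
    have h2 : q ∣ p * F' := (mul_dvd_mul_iff_left hg0).1 h1
    have hcop : IsCoprime q F' := by
      rw [← EuclideanDomain.gcd_isUnit_iff]
      set t := EuclideanDomain.gcd q F' with ht
      have h3 : t ∣ g := EuclideanDomain.dvd_gcd
        (dvd_trans (EuclideanDomain.gcd_dvd_right q F') ⟨g, by rw [hF']; ring⟩)
        (dvd_trans (EuclideanDomain.gcd_dvd_left q F') (EuclideanDomain.div_dvd_of_dvd hgφ))
      exact hsq t (by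
        have := mul_dvd_mul (EuclideanDomain.gcd_dvd_left q F') h3
        rwa [mul_comm q g, hq] at this)
    exact hcop.dvd_of_dvd_mul_right h2
  · rintro ⟨s, rfl⟩
    exact ⟨s * F', by rw [← hq, hF']; ring⟩


lemma assoc_key (φ₁ φ₂ F₁ F₂ : Polynomial ℂ) (hφ₁ : φ₁ ≠ 0) (hφ₂ : φ₂ ≠ 0)
    (hsq₁ : Squarefree φ₁) (hsq₂ : Squarefree φ₂) :
    Associated
      (EuclideanDomain.lcm (φ₁ / EuclideanDomain.gcd F₁ φ₁) (φ₂ / EuclideanDomain.gcd F₂ φ₂) *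
        ((EuclideanDomain.gcd F₁ φ₁ * EuclideanDomain.gcd F₂ φ₂ * EuclideanDomain.gcd φ₁ φ₂) /
          EuclideanDomain.gcd (F₁ * F₂) (EuclideanDomain.gcd φ₁ φ₂)))
      (φ₁ * φ₂) := by
  set g₁ := EuclideanDomain.gcd F₁ φ₁ with hg₁
  set g₂ := EuclideanDomain.gcd F₂ φ₂ with hg₂
  set φ₃ := EuclideanDomain.gcd φ₁ φ₂ with hφ₃
  set h := EuclideanDomain.gcd (F₁ * F₂) φ₃ with hh
  set q₁ := φ₁ / g₁ with hq₁
  set q₂ := φ₂ / g₂ with hq₂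
  set ψ := EuclideanDomain.lcm q₁ q₂ with hψ
  set c := EuclideanDomain.gcd q₁ q₂ with hc
  -- basic nonvanishing and divisibility facts
  have hg₁0 : g₁ ≠ 0 := fun e => hφ₁ (EuclideanDomain.gcd_eq_zero_iff.1 e).2
  have hg₂0 : g₂ ≠ 0 := fun e => hφ₂ (EuclideanDomain.gcd_eq_zero_iff.1 e).2
  have hφ₃0 : φ₃ ≠ 0 := fun e => hφ₁ (EuclideanDomain.gcd_eq_zero_iff.1 e).1
  have hh0 : h ≠ 0 := fun e => hφ₃0 (EuclideanDomain.gcd_eq_zero_iff.1 e).2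
  have hφ₃1 : φ₃ ∣ φ₁ := EuclideanDomain.gcd_dvd_left φ₁ φ₂
  have hφ₃2 : φ₃ ∣ φ₂ := EuclideanDomain.gcd_dvd_right φ₁ φ₂
  have hhφ₃ : h ∣ φ₃ := EuclideanDomain.gcd_dvd_right _ _
  have hhF : h ∣ F₁ * F₂ := EuclideanDomain.gcd_dvd_left _ _
  have e₁ : g₁ * q₁ = φ₁ := EuclideanDomain.mul_div_cancel' hg₁0 (EuclideanDomain.gcd_dvd_right F₁ φ₁)
  have e₂ : g₂ * q₂ = φ₂ := EuclideanDomain.mul_div_cancel' hg₂0 (EuclideanDomain.gcd_dvd_right F₂ φ₂)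
  have e₃ : h * (φ₃ / h) = φ₃ := EuclideanDomain.mul_div_cancel' hh0 hhφ₃
  have ec : c * ψ = q₁ * q₂ := EuclideanDomain.gcd_mul_lcm q₁ q₂
  have hq₁φ : q₁ ∣ φ₁ := EuclideanDomain.div_dvd_of_dvd (EuclideanDomain.gcd_dvd_right F₁ φ₁)
  have hq₂φ : q₂ ∣ φ₂ := EuclideanDomain.div_dvd_of_dvd (EuclideanDomain.gcd_dvd_right F₂ φ₂)
  have hsq₃ : Squarefree φ₃ := hsq₁.squarefree_of_dvd hφ₃1
  -- A1 : Associated c (φ₃ / h)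
  have hA1 : Associated c (φ₃ / h) := by
    apply associated_of_dvd_dvd
    · -- c ∣ φ₃ / h
      have hcφ₃ : c ∣ φ₃ := EuclideanDomain.dvd_gcd
        ((EuclideanDomain.gcd_dvd_left q₁ q₂).trans hq₁φ)
        ((EuclideanDomain.gcd_dvd_right q₁ q₂).trans hq₂φ)
      have hcop : IsCoprime c h := by
        rw [← EuclideanDomain.gcd_isUnit_iff]
        by_contra hun
        have ht0 : EuclideanDomain.gcd c h ≠ 0 :=
          fun e => hh0 (EuclideanDomain.gcd_eq_zero_iff.1 e).2
        obtain ⟨w, hwirr, hwdvd⟩ := WfDvdMonoid.exists_irreducible_factor hun ht0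
        have hwc : w ∣ c := hwdvd.trans (EuclideanDomain.gcd_dvd_left c h)
        have hwh : w ∣ h := hwdvd.trans (EuclideanDomain.gcd_dvd_right c h)
        have : w ∣ F₁ * F₂ := hwh.trans hhF
        rcases hwirr.prime.dvd_or_dvd this with hwF | hwF
        · have hwq : w ∣ q₁ := hwc.trans (EuclideanDomain.gcd_dvd_left q₁ q₂)
          have hwg : w ∣ g₁ := EuclideanDomain.dvd_gcd hwF (hwq.trans hq₁φ)
          exact hwirr.not_isUnit (hsq₁ w (by rw [← e₁]; exact mul_dvd_mul hwg hwq))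
        · have hwq : w ∣ q₂ := hwc.trans (EuclideanDomain.gcd_dvd_right q₁ q₂)
          have hwg : w ∣ g₂ := EuclideanDomain.dvd_gcd hwF (hwq.trans hq₂φ)
          exact hwirr.not_isUnit (hsq₂ w (by rw [← e₂]; exact mul_dvd_mul hwg hwq))
      exact EuclideanDomain.dvd_div_of_mul_dvd
        (by rw [mul_comm]; exact hcop.mul_dvd hcφ₃ hhφ₃)
    · -- φ₃ / h ∣ c
      have main : ∀ (F φ : Polynomial ℂ), φ ≠ 0 → Squarefree φ → φ₃ ∣ φ →
          (∀ x : Polynomial ℂ, x ∣ EuclideanDomain.gcd F φ → x ∣ F₁ * F₂) →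
          (φ₃ / h) ∣ (φ / EuclideanDomain.gcd F φ) := by
        intro F φ hφ0 hsq hdvd hFdvd
        set g := EuclideanDomain.gcd F φ with hgdef
        have hgφ : g ∣ φ := EuclideanDomain.gcd_dvd_right F φ
        have hg0 : g ≠ 0 := fun e => hφ0 (EuclideanDomain.gcd_eq_zero_iff.1 e).2
        have hdh : (φ₃ / h) ∣ φ₃ := EuclideanDomain.div_dvd_of_dvd hhφ₃
        have hcop : IsCoprime (φ₃ / h) g := by
          rw [← EuclideanDomain.gcd_isUnit_iff]
          set t := EuclideanDomain.gcd (φ₃ / h) g with htdef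
          have htg : t ∣ g := EuclideanDomain.gcd_dvd_right _ _
          have hth : t ∣ h := EuclideanDomain.dvd_gcd (hFdvd t htg)
            ((EuclideanDomain.gcd_dvd_left _ _).trans hdh)
          apply hsq₃ t
          rw [← e₃]
          exact mul_dvd_mul hth (EuclideanDomain.gcd_dvd_left _ _)
        apply EuclideanDomain.dvd_div_of_mul_dvd
        rw [mul_comm]
        exact hcop.mul_dvd (hdh.trans hdvd) hgφ
      exact EuclideanDomain.dvd_gcd
        (main F₁ φ₁ hφ₁ hsq₁ hφ₃1 (fun x hx => (hx.trans (EuclideanDomain.gcd_dvd_left F₁ φ₁)).trans (dvd_mul_right F₁ F₂)))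
        (main F₂ φ₂ hφ₂ hsq₂ hφ₃2 (fun x hx => (hx.trans (EuclideanDomain.gcd_dvd_left F₂ φ₂)).trans (dvd_mul_left F₂ F₁)))
  -- now assemble
  have hQ : h ∣ g₁ * g₂ * φ₃ := hhφ₃.trans (dvd_mul_left φ₃ (g₁ * g₂))
  have eQ : h * ((g₁ * g₂ * φ₃) / h) = g₁ * g₂ * φ₃ := EuclideanDomain.mul_div_cancel' hh0 hQ
  set Q := (g₁ * g₂ * φ₃) / h with hQdef
  have step : Associated (ψ * Q * h) (φ₁ * φ₂ * h) := by
    have lhs_eq : ψ * Q * h = (ψ * g₁ * g₂ * h) * (φ₃ / h) := by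
      calc ψ * Q * h = ψ * (h * Q) := by ring
        _ = ψ * (g₁ * g₂ * φ₃) := by rw [eQ]
        _ = ψ * (g₁ * g₂ * (h * (φ₃ / h))) := by rw [e₃]
        _ = (ψ * g₁ * g₂ * h) * (φ₃ / h) := by ring
    have rhs_eq : (ψ * g₁ * g₂ * h) * c = φ₁ * φ₂ * h := by
      calc (ψ * g₁ * g₂ * h) * c = (c * ψ) * (g₁ * g₂ * h) := by ring
        _ = (q₁ * q₂) * (g₁ * g₂ * h) := by rw [ec]
        _ = (g₁ * q₁) * (g₂ * q₂) * h := by ring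
        _ = φ₁ * φ₂ * h := by rw [e₁, e₂]
    rw [lhs_eq, ← rhs_eq]
    exact Associated.mul_left _ hA1.symm
  exact Associated.of_mul_left
    (by rwa [mul_comm (ψ * Q) h, mul_comm (φ₁ * φ₂) h] at step) (Associated.refl h) hh0


lemma rank_aux {n₁ n₂ m : ℕ} (A : Matrix (Fin n₁ ⊕ Fin n₂) (Fin m) ℂ)
    (L : Polynomial ℂ →ₗ[ℂ] (Fin n₁ ⊕ Fin n₂ → ℂ))
    (hcol : ∀ j : Fin m, Aᵀ j = L (X ^ (j : ℕ)))
    (ψ : Polynomial ℂ) (hψ : ψ ≠ 0)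
    (hker : ∀ p, L p = 0 ↔ ψ ∣ p) :
    A.rank = min m ψ.natDegree := by
  classical
  set k := ψ.natDegree with hk
  rw [Matrix.rank_eq_finrank_span_cols]
  -- span of columns = image of degreeLT m under L
  have hspan : Submodule.span ℂ (Set.range Aᵀ) = Submodule.map L (degreeLT ℂ m) := by
    rw [degreeLT_eq_span_X_pow, Submodule.map_span]
    congr 1
    ext y
    simp only [Set.mem_range, Finset.coe_image, Set.image_image, Set.mem_image,
      Finset.mem_coe, Finset.mem_range]
    constructor
    · rintro ⟨j, rfl⟩; exact ⟨j, j.isLt, (hcol j).symm⟩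
    · rintro ⟨j, hj, rfl⟩; exact ⟨⟨j, hj⟩, hcol ⟨j, hj⟩⟩
  rw [show A.col = Aᵀ from rfl, hspan]
  -- restrict L to degreeLT m
  set L' : degreeLT ℂ m →ₗ[ℂ] (Fin n₁ ⊕ Fin n₂ → ℂ) := L.comp (degreeLT ℂ m).subtype with hL'
  have hrange : LinearMap.range L' = Submodule.map L (degreeLT ℂ m) := by
    rw [hL', LinearMap.range_comp, Submodule.range_subtype]
  haveI : FiniteDimensional ℂ (degreeLT ℂ m) :=
    (degreeLTEquiv ℂ m).symm.finiteDimensional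
  have hrk := LinearMap.finrank_range_add_finrank_ker L'
  have hdim : Module.finrank ℂ (degreeLT ℂ m) = m :=
    (degreeLTEquiv ℂ m).finrank_eq.trans (Module.finrank_fin_fun ℂ)
  -- kernel of L' is isomorphic to degreeLT (m - k)
  have hkerdim : Module.finrank ℂ (LinearMap.ker L') = m - k := by
    have hmem : ∀ p : Polynomial ℂ, p ∈ degreeLT ℂ (m - k) → ψ * p ∈ degreeLT ℂ m := by
      intro p hp
      rcases eq_or_ne p 0 with rfl | hp0
      · simpa using (degreeLT ℂ m).zero_mem
      · rw [mem_degreeLT] at hp ⊢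
        rw [degree_mul, degree_eq_natDegree hψ, degree_eq_natDegree hp0] at *
        have hplt : p.natDegree < m - k := by exact_mod_cast hp
        have : k + p.natDegree < m := by omega
        exact_mod_cast this
    have hmem2 : ∀ p : degreeLT ℂ (m - k),
        (⟨ψ * (p : Polynomial ℂ), hmem p p.2⟩ : degreeLT ℂ m) ∈ LinearMap.ker L' := by
      intro p
      simp only [LinearMap.mem_ker, hL', LinearMap.comp_apply, Submodule.subtype_apply]
      exact (hker _).2 ⟨p, rfl⟩
    let T : degreeLT ℂ (m - k) →ₗ[ℂ] LinearMap.ker L' :=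
      { toFun := fun p => ⟨⟨ψ * (p : Polynomial ℂ), hmem p p.2⟩, hmem2 p⟩
        map_add' := fun p q => by
          refine Subtype.ext (Subtype.ext ?_)
          show ψ * ((p : Polynomial ℂ) + (q : Polynomial ℂ)) = ψ * (p : Polynomial ℂ) + ψ * (q : Polynomial ℂ)
          ring
        map_smul' := fun a p => by
          refine Subtype.ext (Subtype.ext ?_)
          show ψ * (a • (p : Polynomial ℂ)) = a • (ψ * (p : Polynomial ℂ))
          rw [Polynomial.smul_eq_C_mul, Polynomial.smul_eq_C_mul]
          ring }
      -- bijectivity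
    have hinj : Function.Injective T := by
      intro p q hpq
      have : ψ * (p : Polynomial ℂ) = ψ * (q : Polynomial ℂ) :=
        congrArg (fun x : LinearMap.ker L' => ((x : degreeLT ℂ m) : Polynomial ℂ)) hpq
      exact Subtype.ext (mul_left_cancel₀ hψ this)
    have hsurj : Function.Surjective T := by
      rintro ⟨⟨q, hq⟩, hqker⟩
      have hLq : L q = 0 := by
        simpa [hL', LinearMap.comp_apply] using hqker
      obtain ⟨s, rfl⟩ := (hker q).1 hLq
      have hs : s ∈ degreeLT ℂ (m - k) := by
        rcases eq_or_ne s 0 with rfl | hs0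
        · exact (degreeLT ℂ (m - k)).zero_mem
        · rw [mem_degreeLT] at hq ⊢
          rw [degree_mul, degree_eq_natDegree hψ, degree_eq_natDegree hs0] at hq
          have : (k : WithBot ℕ) + s.natDegree < m := hq
          have h2 : k + s.natDegree < m := by exact_mod_cast this
          rw [degree_eq_natDegree hs0]
          exact_mod_cast (by omega : s.natDegree < m - k)
      exact ⟨⟨s, hs⟩, by ext; simp [T]⟩
    have heq : Module.finrank ℂ (degreeLT ℂ (m - k)) = Module.finrank ℂ (LinearMap.ker L') :=
      LinearEquiv.finrank_eq (LinearEquiv.ofBijective T ⟨hinj, hsurj⟩)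
    rw [← heq, (degreeLTEquiv ℂ (m - k)).finrank_eq, Module.finrank_fin_fun]
  rw [hrange, hdim, hkerdim] at hrk
  omega

lemma poly_eq_zero_of_coeffs {n : ℕ} {r : Polynomial ℂ} (hr : r.degree < (n : WithBot ℕ))
    (h : ∀ a : Fin n, r.coeff (a : ℕ) = 0) : r = 0 := by
  ext l
  rcases Nat.lt_or_ge l n with hl | hl
  · simpa using h ⟨l, hl⟩
  · simp [coeff_eq_zero_of_degree_lt (lt_of_lt_of_le hr (by exact_mod_cast hl))]


/-- With `φ₃ = gcd(φ₁, φ₂)`,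
`d = deg( gcd(f₁,φ₁)·gcd(f₂,φ₂)·φ₃ / gcd(f₁·f₂, φ₃) )` and `r = min {m, n₁+n₂−d}`,
the rank of the double ideal matrix `H*_{φ₁,φ₂}(f₁,f₂)_{(n₁+n₂)×m}` equals `r`. -/
theorem dblIdealMat_rank (n₁ n₂ m : ℕ) (hn₁ : 0 < n₁) (hn₂ : 0 < n₂)
    (φ₁ φ₂ : Polynomial ℂ) (hm₁ : φ₁.Monic) (hm₂ : φ₂.Monic)
    (hd₁ : φ₁.natDegree = n₁) (hd₂ : φ₂.natDegree = n₂)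
    (h₁0 : φ₁.coeff 0 ≠ 0) (h₂0 : φ₂.coeff 0 ≠ 0)
    (hsq₁ : Squarefree φ₁) (hsq₂ : Squarefree φ₂)
    (f₁ : Fin n₁ → ℂ) (f₂ : Fin n₂ → ℂ)
    (φ₃ : Polynomial ℂ) (hφ₃ : φ₃ = EuclideanDomain.gcd φ₁ φ₂)
    (d : ℕ)
    (hd : d = ((EuclideanDomain.gcd (vecPoly n₁ f₁) φ₁ *
        EuclideanDomain.gcd (vecPoly n₂ f₂) φ₂ * φ₃) /
        EuclideanDomain.gcd (vecPoly n₁ f₁ * vecPoly n₂ f₂) φ₃).natDegree) :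
    (dblIdealMat n₁ n₂ m (rotMat n₁ φ₁) (rotMat n₂ φ₂) f₁ f₂).rank =
      min m (n₁ + n₂ - d) := by
  classical
  subst hφ₃
  have hφ₁0 : φ₁ ≠ 0 := hm₁.ne_zero
  have hφ₂0 : φ₂ ≠ 0 := hm₂.ne_zero
  set F₁ := vecPoly n₁ f₁ with hF₁def
  set F₂ := vecPoly n₂ f₂ with hF₂def
  set g₁ := EuclideanDomain.gcd F₁ φ₁ with hg₁def
  set g₂ := EuclideanDomain.gcd F₂ φ₂ with hg₂def
  set q₁ := φ₁ / g₁ with hq₁def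
  set q₂ := φ₂ / g₂ with hq₂def
  set ψ := EuclideanDomain.lcm q₁ q₂ with hψdef
  have hg₁0 : g₁ ≠ 0 := fun e => hφ₁0 (EuclideanDomain.gcd_eq_zero_iff.1 e).2
  have hg₂0 : g₂ ≠ 0 := fun e => hφ₂0 (EuclideanDomain.gcd_eq_zero_iff.1 e).2
  have e₁ : g₁ * q₁ = φ₁ :=
    EuclideanDomain.mul_div_cancel' hg₁0 (EuclideanDomain.gcd_dvd_right F₁ φ₁)
  have e₂ : g₂ * q₂ = φ₂ :=
    EuclideanDomain.mul_div_cancel' hg₂0 (EuclideanDomain.gcd_dvd_right F₂ φ₂)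
  have hq₁0 : q₁ ≠ 0 := fun e => hφ₁0 (by rw [← e₁, e, mul_zero])
  have hq₂0 : q₂ ≠ 0 := fun e => hφ₂0 (by rw [← e₂, e, mul_zero])
  have hψ0 : ψ ≠ 0 := by
    intro e
    have := EuclideanDomain.gcd_mul_lcm q₁ q₂
    rw [← hψdef, e, mul_zero] at this
    rcases mul_eq_zero.1 this.symm with h | h
    · exact hq₁0 h
    · exact hq₂0 h
  -- the linear map
  set L : Polynomial ℂ →ₗ[ℂ] (Fin n₁ ⊕ Fin n₂ → ℂ) :=
    LinearMap.pi (Sum.elim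
      (fun a : Fin n₁ =>
        (lcoeff ℂ (a : ℕ)).comp ((modByMonicHom φ₁).comp (LinearMap.mulRight ℂ F₁)))
      (fun b : Fin n₂ =>
        (lcoeff ℂ (b : ℕ)).comp ((modByMonicHom φ₂).comp (LinearMap.mulRight ℂ F₂)))) with hLdef
  have hLapp₁ : ∀ (p : Polynomial ℂ) (a : Fin n₁),
      L p (Sum.inl a) = ((p * F₁) %ₘ φ₁).coeff (a : ℕ) := by
    intro p a; rfl
  have hLapp₂ : ∀ (p : Polynomial ℂ) (b : Fin n₂),
      L p (Sum.inr b) = ((p * F₂) %ₘ φ₂).coeff (b : ℕ) := by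
    intro p b; rfl
  -- columns
  have hcol : ∀ j : Fin m,
      (dblIdealMat n₁ n₂ m (rotMat n₁ φ₁) (rotMat n₂ φ₂) f₁ f₂)ᵀ j = L (X ^ (j : ℕ)) := by
    intro j
    funext i
    rw [Matrix.transpose_apply]
    show Sum.elim (((rotMat n₁ φ₁) ^ (j : ℕ)).mulVec f₁)
      (((rotMat n₂ φ₂) ^ (j : ℕ)).mulVec f₂) i = _
    rw [rot_pow_mulVec hm₁ hd₁ f₁ (j : ℕ), rot_pow_mulVec hm₂ hd₂ f₂ (j : ℕ)]
    cases i with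
    | inl a => rw [hLapp₁]; simp [mul_comm, hF₁def]
    | inr b => rw [hLapp₂]; simp [mul_comm, hF₂def]
  -- kernel
  have hker : ∀ p, L p = 0 ↔ ψ ∣ p := by
    intro p
    have hdeg₁ : φ₁.degree = (n₁ : WithBot ℕ) := by
      rw [degree_eq_natDegree hφ₁0, hd₁]
    have hdeg₂ : φ₂.degree = (n₂ : WithBot ℕ) := by
      rw [degree_eq_natDegree hφ₂0, hd₂]
    constructor
    · intro hp
      have h₁ : (p * F₁) %ₘ φ₁ = 0 := by
        apply poly_eq_zero_of_coeffs (hdeg₁ ▸ degree_modByMonic_lt _ hm₁)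
        intro a
        rw [← hLapp₁ p a, hp]; rfl
      have h₂ : (p * F₂) %ₘ φ₂ = 0 := by
        apply poly_eq_zero_of_coeffs (hdeg₂ ▸ degree_modByMonic_lt _ hm₂)
        intro b
        rw [← hLapp₂ p b, hp]; rfl
      have d₁ : q₁ ∣ p := (dvd_step hφ₁0 hsq₁ p).1 ((modByMonic_eq_zero_iff_dvd hm₁).1 h₁)
      have d₂ : q₂ ∣ p := (dvd_step hφ₂0 hsq₂ p).1 ((modByMonic_eq_zero_iff_dvd hm₂).1 h₂)
      exact EuclideanDomain.lcm_dvd d₁ d₂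
    · intro hp
      have d₁ : q₁ ∣ p := (EuclideanDomain.dvd_lcm_left q₁ q₂).trans hp
      have d₂ : q₂ ∣ p := (EuclideanDomain.dvd_lcm_right q₁ q₂).trans hp
      have h₁ : (p * F₁) %ₘ φ₁ = 0 :=
        (modByMonic_eq_zero_iff_dvd hm₁).2 ((dvd_step hφ₁0 hsq₁ p).2 d₁)
      have h₂ : (p * F₂) %ₘ φ₂ = 0 :=
        (modByMonic_eq_zero_iff_dvd hm₂).2 ((dvd_step hφ₂0 hsq₂ p).2 d₂)
      funext i
      cases i with
      | inl a => rw [hLapp₁, h₁]; rfl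
      | inr b => rw [hLapp₂, h₂]; rfl
  rw [rank_aux _ L hcol ψ hψ0 hker]
  -- degree identity
  have hassoc := assoc_key φ₁ φ₂ F₁ F₂ hφ₁0 hφ₂0 hsq₁ hsq₂
  set Q := (g₁ * g₂ * EuclideanDomain.gcd φ₁ φ₂) /
      EuclideanDomain.gcd (F₁ * F₂) (EuclideanDomain.gcd φ₁ φ₂) with hQdef
  have hQ0 : Q ≠ 0 := by
    intro e
    have hφ₃0 : EuclideanDomain.gcd φ₁ φ₂ ≠ 0 :=
      fun e' => hφ₁0 (EuclideanDomain.gcd_eq_zero_iff.1 e').1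
    have hh0 : EuclideanDomain.gcd (F₁ * F₂) (EuclideanDomain.gcd φ₁ φ₂) ≠ 0 :=
      fun e' => hφ₃0 (EuclideanDomain.gcd_eq_zero_iff.1 e').2
    have hQdvd : EuclideanDomain.gcd (F₁ * F₂) (EuclideanDomain.gcd φ₁ φ₂) ∣
        g₁ * g₂ * EuclideanDomain.gcd φ₁ φ₂ :=
      (EuclideanDomain.gcd_dvd_right _ _).trans (dvd_mul_left _ _)
    have := EuclideanDomain.mul_div_cancel' hh0 hQdvd
    rw [← hQdef, e, mul_zero] at this
    have hne : g₁ * g₂ * EuclideanDomain.gcd φ₁ φ₂ ≠ 0 :=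
      mul_ne_zero (mul_ne_zero hg₁0 hg₂0) hφ₃0
    exact hne this.symm
  have hnd : ψ.natDegree + Q.natDegree = n₁ + n₂ := by
    have h1 : (ψ * Q).natDegree = (φ₁ * φ₂).natDegree :=
      natDegree_eq_of_degree_eq (degree_eq_degree_of_associated hassoc)
    rw [natDegree_mul hψ0 hQ0, natDegree_mul hφ₁0 hφ₂0, hd₁, hd₂] at h1
    exact h1
  have hdQ : d = Q.natDegree := hd
  rw [hdQ]
  omega
end

section
/- With d and r as in the rank theorem for double ideal matrices, the first r columns of H*_{φ₁,φ₂}(f₁,f₂)_{(n₁+n₂)×m} are linearly independent; moreover any r consecutive columns are linearly independent. -/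
open Polynomial Matrix

lemma vecPoly_natDegree_lt {n : ℕ} {v : Fin n → ℂ} (h : vecPoly n v ≠ 0) :
    (vecPoly n v).natDegree < n := by
  by_contra h'
  push_neg at h'
  have := Polynomial.leadingCoeff_ne_zero.mpr h
  rw [Polynomial.leadingCoeff, vecPoly_coeff, dif_neg (by omega)] at this
  exact this rfl

lemma rotMat_mulVec {n : ℕ} (hn : 0 < n) (φ : Polynomial ℂ) (v : Fin n → ℂ) (i : Fin n) :
    (rotMat n φ).mulVec v i =
      (if h : 0 < (i : ℕ) then v ⟨(i : ℕ) - 1, by omega⟩ else 0)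
        - φ.coeff (i : ℕ) * v ⟨n - 1, by omega⟩ := by
  have hlast : ¬ ((⟨n-1, by omega⟩ : Fin n) : ℕ) + 1 < n := by simp; omega
  rw [Matrix.mulVec, dotProduct,
    ← Finset.sum_erase_add _ _ (Finset.mem_univ (⟨n-1, by omega⟩ : Fin n))]
  have hB : rotMat n φ i ⟨n-1, by omega⟩ * v ⟨n-1, by omega⟩
      = -(φ.coeff (i:ℕ) * v ⟨n-1, by omega⟩) := by
    simp only [rotMat, Matrix.of_apply, if_neg hlast]; ring
  have hA : ∑ j ∈ Finset.univ.erase (⟨n-1, by omega⟩ : Fin n), rotMat n φ i j * v j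
      = (if h : 0 < (i : ℕ) then v ⟨(i : ℕ) - 1, by omega⟩ else 0) := by
    by_cases h : 0 < (i : ℕ)
    · rw [dif_pos h]
      have hmem : (⟨(i:ℕ)-1, by omega⟩ : Fin n) ∈ Finset.univ.erase (⟨n-1, by omega⟩ : Fin n) := by
        rw [Finset.mem_erase]
        refine ⟨?_, Finset.mem_univ _⟩
        intro hc
        have : (i:ℕ) - 1 = n - 1 := by simpa [Fin.ext_iff] using hc
        omega
      rw [Finset.sum_eq_single_of_mem _ hmem]
      · have hj1 : ((⟨(i:ℕ)-1, by omega⟩ : Fin n) : ℕ) + 1 < n := by simp; omega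
        simp only [rotMat, Matrix.of_apply, if_pos hj1]
        rw [if_pos (show (i:ℕ) = ((⟨(i:ℕ)-1, by omega⟩ : Fin n) : ℕ) + 1 by simp; omega)]
        ring
      · intro j hj hne
        have hj1 : (j : ℕ) + 1 < n := by
          rcases Finset.mem_erase.1 hj with ⟨hne', _⟩
          have : (j:ℕ) ≠ n - 1 := fun hc => hne' (by ext; simp [hc])
          omega
        have hne2 : ¬ ((i : ℕ) = (j : ℕ) + 1) := by
          intro hc
          exact hne (Fin.ext (by simp; omega))
        simp only [rotMat, Matrix.of_apply, if_pos hj1, if_neg hne2, zero_mul]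
    · rw [dif_neg h]
      apply Finset.sum_eq_zero
      intro j hj
      have hj1 : (j : ℕ) + 1 < n := by
        rcases Finset.mem_erase.1 hj with ⟨hne', _⟩
        have : (j:ℕ) ≠ n - 1 := fun hc => hne' (by ext; simp [hc])
        omega
      have hne2 : ¬ ((i : ℕ) = (j : ℕ) + 1) := by omega
      simp only [rotMat, Matrix.of_apply, if_pos hj1, if_neg hne2, zero_mul]
  rw [hA, hB]
  ring

lemma vecPoly_step {n : ℕ} (hn : 0 < n) {φ : Polynomial ℂ} (hm : φ.Monic)
    (hdφ : φ.natDegree = n) (v : Fin n → ℂ) :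
    vecPoly n ((rotMat n φ).mulVec v) =
      X * vecPoly n v - C (v ⟨n - 1, by omega⟩) * φ := by
  ext k
  rw [Polynomial.coeff_sub, Polynomial.coeff_C_mul, vecPoly_coeff]
  rcases Nat.eq_zero_or_pos k with hk | hk
  · subst hk
    rw [Polynomial.mul_coeff_zero, Polynomial.coeff_X_zero, zero_mul]
    rw [dif_pos hn, rotMat_mulVec hn, dif_neg (by simp)]
    ring
  · obtain ⟨k, rfl⟩ : ∃ k', k = k' + 1 := ⟨k - 1, by omega⟩
    rw [Polynomial.coeff_X_mul, vecPoly_coeff]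
    by_cases h : k + 1 < n
    · rw [dif_pos h, rotMat_mulVec hn, dif_pos (by simp), dif_pos (by omega)]
      simp only [Nat.add_sub_cancel]
      ring
    · rw [dif_neg h]
      by_cases h2 : k + 1 = n
      · rw [dif_pos (by omega)]
        have : φ.coeff (k+1) = 1 := by
          rw [show k + 1 = φ.natDegree by omega]; exact hm.coeff_natDegree
        have hidx : (⟨n-1, by omega⟩ : Fin n) = ⟨k, by omega⟩ := Fin.ext (by simp; omega)
        rw [this, hidx]
        ring
      · rw [dif_neg (by omega)]
        have : φ.coeff (k+1) = 0 :=
          Polynomial.coeff_eq_zero_of_natDegree_lt (by omega)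
        rw [this]
        ring

lemma vecPoly_pow_dvd {n : ℕ} (hn : 0 < n) {φ : Polynomial ℂ} (hm : φ.Monic)
    (hdφ : φ.natDegree = n) (v : Fin n → ℂ) (k : ℕ) :
    φ ∣ X ^ k * vecPoly n v - vecPoly n ((rotMat n φ ^ k).mulVec v) := by
  induction k with
  | zero => simp [Matrix.one_mulVec]
  | succ k ih =>
    have hrw : (rotMat n φ ^ (k+1)).mulVec v
        = (rotMat n φ).mulVec ((rotMat n φ ^ k).mulVec v) := by
      rw [Matrix.mulVec_mulVec, ← pow_succ']
    set w := (rotMat n φ ^ k).mulVec v with hw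
    have h1 := vecPoly_step hn hm hdφ w
    have : X ^ (k+1) * vecPoly n v - vecPoly n ((rotMat n φ ^ (k+1)).mulVec v)
        = X * (X ^ k * vecPoly n v - vecPoly n w)
          + C (w ⟨n - 1, by omega⟩) * φ := by
      rw [hrw, h1]; ring
    rw [this]
    exact dvd_add (ih.mul_left X) (Dvd.intro_left _ rfl)

lemma vecPoly_sum_smul (n : ℕ) {ι : Type*} (s : Finset ι) (c : ι → ℂ) (a : ι → Fin n → ℂ) :
    vecPoly n (∑ j ∈ s, c j • a j) = ∑ j ∈ s, Polynomial.C (c j) * vecPoly n (a j) := by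
  classical
  induction s using Finset.induction_on with
  | empty => simp [vecPoly]
  | insert _ _ hj ih =>
    rw [Finset.sum_insert hj, Finset.sum_insert hj, ← ih]
    simp only [vecPoly, Pi.add_apply, Pi.smul_apply, smul_eq_mul, map_add, Polynomial.C_mul,
      ← Finset.sum_add_distrib, Finset.mul_sum]
    exact Finset.sum_congr rfl fun i _ => by ring

/-- Bezout-based coprimality. -/
lemma coprime_div_gcd {F φ : Polynomial ℂ} (hφ : φ ≠ 0) :
    IsCoprime (φ / EuclideanDomain.gcd F φ) (F / EuclideanDomain.gcd F φ) := by
  classical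
  set g := EuclideanDomain.gcd F φ with hg
  have hg0 : g ≠ 0 := fun h => hφ ((EuclideanDomain.gcd_eq_zero_iff.1 h).2)
  have hgF : g * (F / g) = F :=
    EuclideanDomain.mul_div_cancel' hg0 (EuclideanDomain.gcd_dvd_left _ _)
  have hgφ : g * (φ / g) = φ :=
    EuclideanDomain.mul_div_cancel' hg0 (EuclideanDomain.gcd_dvd_right _ _)
  have hb := EuclideanDomain.gcd_eq_gcd_ab F φ
  have key : g * 1 = g * ((F / g) * EuclideanDomain.gcdA F φ
      + (φ / g) * EuclideanDomain.gcdB F φ) := by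
    rw [mul_one, mul_add, ← mul_assoc, ← mul_assoc, hgF, hgφ]
    exact hb
  have h1 := mul_left_cancel₀ hg0 key
  exact ⟨EuclideanDomain.gcdB F φ, EuclideanDomain.gcdA F φ, by linear_combination -h1⟩

lemma divides_step {n : ℕ} (hn : 0 < n) {φ : Polynomial ℂ} (hm : φ.Monic)
    (hdφ : φ.natDegree = n) (h0 : φ.coeff 0 ≠ 0) (f : Fin n → ℂ) {r : ℕ} (s : ℕ)
    (c : Fin r → ℂ)
    (hsum : ∑ j : Fin r, c j • ((rotMat n φ ^ (s + (j : ℕ))).mulVec f) = 0) :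
    (φ / EuclideanDomain.gcd (vecPoly n f) φ) ∣ vecPoly r c := by
  classical
  have hφ0 : φ ≠ 0 := hm.ne_zero
  set F := vecPoly n f with hF
  set cp := vecPoly r c with hcp
  -- φ ∣ X^s * cp * F
  have h2 : (0 : Polynomial ℂ)
      = ∑ j : Fin r, C (c j) * vecPoly n ((rotMat n φ ^ (s + (j:ℕ))).mulVec f) := by
    rw [← vecPoly_sum_smul, hsum]
    simp [vecPoly]
  have h3 : X ^ s * cp * F = ∑ j : Fin r, C (c j) * (X ^ (s + (j:ℕ)) * F) := by
    rw [hcp, vecPoly, Finset.mul_sum, Finset.sum_mul]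
    refine Finset.sum_congr rfl fun j _ => ?_
    rw [pow_add]
    ring
  have h1 : φ ∣ X ^ s * cp * F := by
    have : X ^ s * cp * F = ∑ j : Fin r,
        C (c j) * (X ^ (s + (j:ℕ)) * F - vecPoly n ((rotMat n φ ^ (s + (j:ℕ))).mulVec f)) := by
      rw [h3]
      rw [show (∑ j : Fin r, C (c j) * (X ^ (s + (j:ℕ)) * F)) =
        (∑ j : Fin r, C (c j) * (X ^ (s + (j:ℕ)) * F)) - 0 from (sub_zero _).symm, h2,
        ← Finset.sum_sub_distrib]
      exact Finset.sum_congr rfl fun j _ => by ring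
    rw [this]
    exact Finset.dvd_sum fun j _ => ((vecPoly_pow_dvd hn hm hdφ f (s + (j:ℕ))).mul_left _)
  -- strip X^s
  have hX : IsCoprime (φ : Polynomial ℂ) (X ^ s) :=
    ((Polynomial.prime_X.coprime_iff_not_dvd.2
      (by rw [Polynomial.X_dvd_iff]; exact h0)).pow_left).symm
  have h5 : φ ∣ cp * F := hX.dvd_of_dvd_mul_left (by rwa [← mul_assoc])
  -- divide by gcd
  set g := EuclideanDomain.gcd F φ with hg
  have hg0 : g ≠ 0 := fun h => hφ0 ((EuclideanDomain.gcd_eq_zero_iff.1 h).2)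
  have hgF : g * (F / g) = F :=
    EuclideanDomain.mul_div_cancel' hg0 (EuclideanDomain.gcd_dvd_left _ _)
  have hgφ : g * (φ / g) = φ :=
    EuclideanDomain.mul_div_cancel' hg0 (EuclideanDomain.gcd_dvd_right _ _)
  have h6 : g * (φ / g) ∣ g * ((F / g) * cp) := by
    rw [hgφ]
    have : g * ((F / g) * cp) = cp * F := by rw [← mul_assoc, hgF]; ring
    rw [this]
    exact h5
  have h7 : (φ / g) ∣ (F / g) * cp := (mul_dvd_mul_iff_left hg0).1 h6
  exact (coprime_div_gcd hφ0).dvd_of_dvd_mul_left h7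

/-- With `d` and `r = min {m, n₁+n₂−d}` as in the rank theorem for double ideal matrices,
the first `r` columns of `H*_{φ₁,φ₂}(f₁,f₂)_{(n₁+n₂)×m}` are linearly independent;
moreover any `r` consecutive columns are linearly independent. -/
theorem dblIdealMat_columns_linearIndependent (n₁ n₂ m : ℕ) (hn₁ : 0 < n₁) (hn₂ : 0 < n₂)
    (φ₁ φ₂ : Polynomial ℂ) (hm₁ : φ₁.Monic) (hm₂ : φ₂.Monic)
    (hd₁ : φ₁.natDegree = n₁) (hd₂ : φ₂.natDegree = n₂)
    (h₁0 : φ₁.coeff 0 ≠ 0) (h₂0 : φ₂.coeff 0 ≠ 0)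
    (hsq₁ : Squarefree φ₁) (hsq₂ : Squarefree φ₂)
    (f₁ : Fin n₁ → ℂ) (f₂ : Fin n₂ → ℂ)
    (φ₃ : Polynomial ℂ) (hφ₃ : φ₃ = EuclideanDomain.gcd φ₁ φ₂)
    (d : ℕ)
    (hd : d = ((EuclideanDomain.gcd (vecPoly n₁ f₁) φ₁ *
        EuclideanDomain.gcd (vecPoly n₂ f₂) φ₂ * φ₃) /
        EuclideanDomain.gcd (vecPoly n₁ f₁ * vecPoly n₂ f₂) φ₃).natDegree)
    (r : ℕ) (hr : r = min m (n₁ + n₂ - d)) :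
    LinearIndependent ℂ (fun j : Fin r =>
        Sum.elim ((rotMat n₁ φ₁ ^ (j : ℕ)).mulVec f₁)
          ((rotMat n₂ φ₂ ^ (j : ℕ)).mulVec f₂)) ∧
      ∀ s : ℕ, s + r ≤ m →
        LinearIndependent ℂ (fun j : Fin r =>
          Sum.elim ((rotMat n₁ φ₁ ^ (s + (j : ℕ))).mulVec f₁)
            ((rotMat n₂ φ₂ ^ (s + (j : ℕ))).mulVec f₂)) := by
  classical
  -- notation
  set F₁ := vecPoly n₁ f₁ with hF₁
  set F₂ := vecPoly n₂ f₂ with hF₂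
  set g₁ := EuclideanDomain.gcd F₁ φ₁ with hg₁
  set g₂ := EuclideanDomain.gcd F₂ φ₂ with hg₂
  set v₁ := φ₁ / g₁ with hv₁
  set v₂ := φ₂ / g₂ with hv₂
  set t := EuclideanDomain.gcd (F₁ * F₂) φ₃ with ht
  set q := EuclideanDomain.gcd v₁ v₂ with hq
  set L := EuclideanDomain.lcm v₁ v₂ with hL
  have hφ₁0 : φ₁ ≠ 0 := hm₁.ne_zero
  have hφ₂0 : φ₂ ≠ 0 := hm₂.ne_zero
  have hφ₃0 : φ₃ ≠ 0 := by
    rw [hφ₃]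
    intro h
    exact hφ₁0 (EuclideanDomain.gcd_eq_zero_iff.1 h).1
  have hg₁0 : g₁ ≠ 0 := fun h => hφ₁0 (EuclideanDomain.gcd_eq_zero_iff.1 h).2
  have hg₂0 : g₂ ≠ 0 := fun h => hφ₂0 (EuclideanDomain.gcd_eq_zero_iff.1 h).2
  have hgφ₁ : g₁ * v₁ = φ₁ :=
    EuclideanDomain.mul_div_cancel' hg₁0 (EuclideanDomain.gcd_dvd_right _ _)
  have hgφ₂ : g₂ * v₂ = φ₂ :=
    EuclideanDomain.mul_div_cancel' hg₂0 (EuclideanDomain.gcd_dvd_right _ _)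
  have hv₁0 : v₁ ≠ 0 := fun h => hφ₁0 (by rw [← hgφ₁, h, mul_zero])
  have hv₂0 : v₂ ≠ 0 := fun h => hφ₂0 (by rw [← hgφ₂, h, mul_zero])
  have ht0 : t ≠ 0 := fun h => hφ₃0 (EuclideanDomain.gcd_eq_zero_iff.1 h).2
  have hv₁φ₁ : v₁ ∣ φ₁ := ⟨g₁, by rw [← hgφ₁, mul_comm]⟩
  have hv₂φ₂ : v₂ ∣ φ₂ := ⟨g₂, by rw [← hgφ₂, mul_comm]⟩
  have hgl : q * L = v₁ * v₂ := EuclideanDomain.gcd_mul_lcm v₁ v₂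
  have hq0 : q ≠ 0 := fun h => hv₁0 (EuclideanDomain.gcd_eq_zero_iff.1 h).1
  have hL0 : L ≠ 0 := by
    intro h
    apply mul_ne_zero hv₁0 hv₂0
    rw [← hgl, h, mul_zero]
  -- coprimality of q and t
  have hqt : IsCoprime q t := by
    by_contra hnc
    rw [← EuclideanDomain.gcd_isUnit_iff] at hnc
    have hqt0 : EuclideanDomain.gcd q t ≠ 0 :=
      fun h => ht0 (EuclideanDomain.gcd_eq_zero_iff.1 h).2
    obtain ⟨π, hπ, hπd⟩ := WfDvdMonoid.exists_irreducible_factor hnc hqt0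
    have hπq : π ∣ q := hπd.trans (EuclideanDomain.gcd_dvd_left _ _)
    have hπt : π ∣ t := hπd.trans (EuclideanDomain.gcd_dvd_right _ _)
    have hπp : Prime π := hπ.prime
    have hπv₁ : π ∣ v₁ := hπq.trans (EuclideanDomain.gcd_dvd_left _ _)
    have hπv₂ : π ∣ v₂ := hπq.trans (EuclideanDomain.gcd_dvd_right _ _)
    have hπF : π ∣ F₁ * F₂ := hπt.trans (EuclideanDomain.gcd_dvd_left _ _)
    rcases hπp.dvd_mul.1 hπF with hc | hc
    · have hπg₁ : π ∣ g₁ :=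
        EuclideanDomain.dvd_gcd hc (hπv₁.trans hv₁φ₁)
      have : π * π ∣ φ₁ := by
        rw [← hgφ₁]
        exact mul_dvd_mul hπg₁ hπv₁
      exact hπ.not_isUnit (hsq₁ π this)
    · have hπg₂ : π ∣ g₂ :=
        EuclideanDomain.dvd_gcd hc (hπv₂.trans hv₂φ₂)
      have : π * π ∣ φ₂ := by
        rw [← hgφ₂]
        exact mul_dvd_mul hπg₂ hπv₂
      exact hπ.not_isUnit (hsq₂ π this)
  -- q * t ∣ φ₃
  have hqφ₃ : q ∣ φ₃ := by
    rw [hφ₃]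
    exact EuclideanDomain.dvd_gcd ((EuclideanDomain.gcd_dvd_left v₁ v₂).trans hv₁φ₁)
      ((EuclideanDomain.gcd_dvd_right v₁ v₂).trans hv₂φ₂)
  have htφ₃ : t ∣ φ₃ := EuclideanDomain.gcd_dvd_right _ _
  have hqtdvd : q * t ∣ φ₃ := hqt.mul_dvd hqφ₃ htφ₃
  -- degree bookkeeping
  have e1 : g₁.natDegree + v₁.natDegree = n₁ := by
    rw [← Polynomial.natDegree_mul hg₁0 hv₁0, hgφ₁, hd₁]
  have e2 : g₂.natDegree + v₂.natDegree = n₂ := by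
    rw [← Polynomial.natDegree_mul hg₂0 hv₂0, hgφ₂, hd₂]
  have e3 : q.natDegree + L.natDegree = v₁.natDegree + v₂.natDegree := by
    rw [← Polynomial.natDegree_mul hq0 hL0, hgl, Polynomial.natDegree_mul hv₁0 hv₂0]
  have e4 : t.natDegree + d = g₁.natDegree + g₂.natDegree + φ₃.natDegree := by
    obtain ⟨w, hw⟩ : t ∣ g₁ * g₂ * φ₃ := htφ₃.trans (dvd_mul_left φ₃ (g₁ * g₂))
    have hw0 : w ≠ 0 := by
      intro h
      apply mul_ne_zero (mul_ne_zero hg₁0 hg₂0) hφ₃0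
      rw [hw, h, mul_zero]
    have hdw : d = w.natDegree := by
      rw [hd, hw, mul_div_cancel_left₀ _ ht0]
    rw [hdw, ← Polynomial.natDegree_mul ht0 hw0, ← hw,
      Polynomial.natDegree_mul (mul_ne_zero hg₁0 hg₂0) hφ₃0,
      Polynomial.natDegree_mul hg₁0 hg₂0]
  have e5 : q.natDegree + t.natDegree ≤ φ₃.natDegree := by
    rw [← Polynomial.natDegree_mul hq0 ht0]
    exact Polynomial.natDegree_le_of_dvd hqtdvd hφ₃0
  have hrL : r ≤ L.natDegree := by
    have hrmin : r ≤ n₁ + n₂ - d := hr ▸ min_le_right _ _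
    omega
  -- the main independence statement
  have key : ∀ s : ℕ, LinearIndependent ℂ (fun j : Fin r =>
      Sum.elim ((rotMat n₁ φ₁ ^ (s + (j : ℕ))).mulVec f₁)
        ((rotMat n₂ φ₂ ^ (s + (j : ℕ))).mulVec f₂)) := by
    intro s
    rw [Fintype.linearIndependent_iff]
    intro c hc
    have hc₁ : ∑ j : Fin r, c j • ((rotMat n₁ φ₁ ^ (s + (j : ℕ))).mulVec f₁) = 0 := by
      funext i
      have := congrFun hc (Sum.inl i)
      simpa [Finset.sum_apply] using this
    have hc₂ : ∑ j : Fin r, c j • ((rotMat n₂ φ₂ ^ (s + (j : ℕ))).mulVec f₂) = 0 := by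
      funext i
      have := congrFun hc (Sum.inr i)
      simpa [Finset.sum_apply] using this
    have hdv₁ : v₁ ∣ vecPoly r c := divides_step hn₁ hm₁ hd₁ h₁0 f₁ s c hc₁
    have hdv₂ : v₂ ∣ vecPoly r c := divides_step hn₂ hm₂ hd₂ h₂0 f₂ s c hc₂
    have hdL : L ∣ vecPoly r c := EuclideanDomain.lcm_dvd hdv₁ hdv₂
    have hcz : vecPoly r c = 0 := by
      by_contra hne
      have h1 := Polynomial.natDegree_le_of_dvd hdL hne
      have h2 := vecPoly_natDegree_lt hne
      omega
    intro i
    have := vecPoly_coeff r c i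
    rw [hcz] at this
    simpa [i.isLt] using this.symm
  refine ⟨?_, fun s _ => key s⟩
  simpa using key 0
end

section
/- The φ-quasi cyclic code C̄_{ā,b̄} = { (f·ā mod φ₁, f·b̄ mod φ₂) : f ∈ F_q[x]/⟨φ₁φ₂/φ₃⟩ } has F_q-dimension equal to deg h̄, where h̄ = φ₁φ₂/(φ₃·ḡ) with ḡ = gcd(ā, φ₁/φ₃)·gcd(b̄, φ₂/φ₃)·gcd(ā, b̄, φ₃). -/
/-! The code is the image of the `F`-linear map `f ↦ (f a mod φ₁, f b mod φ₂)` on `F[X]`, whose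
kernel is generated by `K = lcm k₁ k₂` with `φ₁ = gcd a φ₁ * k₁` and `φ₂ = gcd b φ₂ * k₂`; so the
code has dimension `deg K`. Squarefreeness makes `u = φ₁ / φ₃`, `w = φ₂ / φ₃` and `φ₃` pairwise
coprime, so every gcd splits along `φ₁ = φ₃ u`, `φ₂ = φ₃ w`. With `s = gcd a φ₃`, `t = gcd b φ₃`
and the identity `lcm (φ₃ / s) (φ₃ / t) * gcd s t ~ φ₃`, this gives `K * ḡ ~ u w φ₃ = φ₁ φ₂ / φ₃`,
that is `K ~ h̄`. -/

open Polynomial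

local infixl:50 " ~ᵤ " => Associated

section GCDMonoid

variable {α : Type*} [CommMonoidWithZero α] [GCDMonoid α]

theorem dvd_mul_iff_dvd_of_eq_gcd_mul {p a k f : α} (hp : p ≠ 0) (hk : p = gcd a p * k) :
    p ∣ f * a ↔ k ∣ f := by
  have hg : gcd a p ≠ 0 := fun h => hp ((gcd_eq_zero_iff a p).1 h).2
  calc p ∣ f * a ↔ p ∣ gcd p a * f := by rw [dvd_gcd_mul_iff_dvd_mul, mul_comm]
    _ ↔ gcd a p * k ∣ gcd a p * f := by
      rw [((gcd_comm' p a).mul_right f).dvd_iff_dvd_right, ← hk]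
    _ ↔ k ∣ f := mul_dvd_mul_iff_left hg

theorem gcd_mul_associated_of_isRelPrime (a : α) {u v : α} (h : IsRelPrime u v) :
    gcd a (u * v) ~ᵤ gcd a u * gcd a v := by
  have hgcd : IsRelPrime (gcd a u) (gcd a v) :=
    (h.of_dvd_left (gcd_dvd_right a u)).of_dvd_right (gcd_dvd_right a v)
  exact associated_of_dvd_dvd (gcd_mul_dvd_mul_gcd a u v)
    (dvd_gcd (hgcd.mul_dvd (gcd_dvd_left a u) (gcd_dvd_left a v))
      (mul_dvd_mul (gcd_dvd_right a u) (gcd_dvd_right a v)))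

theorem gcd_mul_left_associated_of_isRelPrime {x z : α} (y : α) (h : IsRelPrime x z) :
    gcd (x * y) z ~ᵤ gcd y z :=
  associated_of_dvd_dvd
    (dvd_gcd ((h.symm.of_dvd_left (gcd_dvd_right _ _)).dvd_of_dvd_mul_left (gcd_dvd_left _ _))
      (gcd_dvd_right _ _))
    (gcd_dvd_gcd (dvd_mul_left y x) dvd_rfl)

theorem lcm_mul_left_associated_of_isRelPrime {x z : α} (y : α) (h : IsRelPrime x z) :
    lcm (x * y) z ~ᵤ x * lcm y z := by
  rcases eq_or_ne x 0 with rfl | hx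
  · simp [lcm_zero_left]
  refine associated_of_dvd_dvd (lcm_dvd (mul_dvd_mul_left x (dvd_lcm_left y z))
    ((dvd_lcm_right y z).mul_left x)) ?_
  obtain ⟨m, hm⟩ := (dvd_mul_right x y).trans (dvd_lcm_left (x * y) z)
  have hy : y ∣ m := (mul_dvd_mul_iff_left hx).1 (hm ▸ dvd_lcm_left (x * y) z)
  have hz : z ∣ m := h.symm.dvd_of_dvd_mul_left (hm ▸ dvd_lcm_right (x * y) z)
  exact hm ▸ mul_dvd_mul_left x (lcm_dvd hy hz)

theorem lcm_mul_gcd_associated_of_eq_mul {p s s' t t' : α} (hp : p ≠ 0)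
    (hs : p = s * s') (ht : p = t * t') :
    lcm s' t' * gcd s t ~ᵤ p := by
  have hgcd : s * t * gcd s' t' ~ᵤ p * gcd s t :=
    calc s * t * gcd s' t' ~ᵤ gcd (s * t * s') (s * t * t') := (gcd_mul_left' _ _ _).symm
      _ = gcd (t * p) (s * p) := by
        rw [show t * p = s * t * s' by rw [hs]; ac_rfl, show s * p = s * t * t' by rw [ht]; ac_rfl]
      _ ~ᵤ gcd t s * p := gcd_mul_right' p t s
      _ ~ᵤ p * gcd s t := by rw [mul_comm]; exact (gcd_comm' t s).mul_left p
  refine Associated.of_mul_left ?_ (Associated.refl p) hp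
  calc p * (lcm s' t' * gcd s t) = lcm s' t' * (p * gcd s t) := by ac_rfl
    _ ~ᵤ lcm s' t' * (s * t * gcd s' t') := hgcd.symm.mul_left _
    _ = s * t * (gcd s' t' * lcm s' t') := by ac_rfl
    _ ~ᵤ s * t * (s' * t') := (gcd_mul_lcm s' t').mul_left _
    _ = p * p := by nth_rw 1 [hs]; nth_rw 1 [ht]; ac_rfl

theorem gcd_gcd_associated_gcd_gcd_gcd (a b p : α) :
    gcd (gcd a b) p ~ᵤ gcd (gcd a p) (gcd b p) :=
  associated_of_dvd_dvd
    (dvd_gcd (gcd_dvd_gcd (gcd_dvd_left a b) dvd_rfl) (gcd_dvd_gcd (gcd_dvd_right a b) dvd_rfl))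
    (dvd_gcd (dvd_gcd ((gcd_dvd_left _ _).trans (gcd_dvd_left a p))
      ((gcd_dvd_right _ _).trans (gcd_dvd_left b p)))
      ((gcd_dvd_left _ _).trans (gcd_dvd_right a p)))

theorem associated_cofactor_mul_of_isRelPrime {p u a k s u' : α} (hpu : IsRelPrime p u)
    (h0 : p * u ≠ 0) (hk : p * u = gcd a (p * u) * k) (hs : p = gcd a p * s)
    (hu : u = gcd a u * u') :
    k ~ᵤ u' * s := by
  have hg0 : gcd a (p * u) ≠ 0 := fun h => h0 ((gcd_eq_zero_iff a _).1 h).2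
  have e : p * u = gcd a p * gcd a u * (u' * s) := by
    rw [show gcd a p * gcd a u * (u' * s) = gcd a p * s * (gcd a u * u') by ac_rfl, ← hs, ← hu]
  have hmul : gcd a (p * u) * k ~ᵤ gcd a p * gcd a u * (u' * s) := by rw [← hk, ← e]
  exact hmul.of_mul_left (gcd_mul_associated_of_isRelPrime a hpu) hg0

theorem lcm_cofactors_mul_gcd_associated {p u w a b k₁ k₂ : α} (hp : p ≠ 0) (hu : u ≠ 0)
    (hw : w ≠ 0) (hpu : IsRelPrime p u) (hpw : IsRelPrime p w) (huw : IsRelPrime u w)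
    (hk₁ : p * u = gcd a (p * u) * k₁) (hk₂ : p * w = gcd b (p * w) * k₂) :
    lcm k₁ k₂ * (gcd a u * gcd b w * gcd (gcd a b) p) ~ᵤ u * w * p := by
  obtain ⟨s, hs⟩ := gcd_dvd_right a p
  obtain ⟨t, ht⟩ := gcd_dvd_right b p
  obtain ⟨u', hu'⟩ := gcd_dvd_right a u
  obtain ⟨w', hw'⟩ := gcd_dvd_right b w
  have hk₁' := associated_cofactor_mul_of_isRelPrime hpu (mul_ne_zero hp hu) hk₁ hs hu'
  have hk₂' := associated_cofactor_mul_of_isRelPrime hpw (mul_ne_zero hp hw) hk₂ ht hw'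
  have hu't : IsRelPrime u' (w' * t) :=
    ((huw.mul_right hpu.symm).of_dvd_left (Dvd.intro_left _ hu'.symm)).of_dvd_right
      (mul_dvd_mul (Dvd.intro_left _ hw'.symm) (Dvd.intro_left _ ht.symm))
  have hw's : IsRelPrime w' s :=
    (hpw.symm.of_dvd_left (Dvd.intro_left _ hw'.symm)).of_dvd_right (Dvd.intro_left _ hs.symm)
  have hK : lcm k₁ k₂ ~ᵤ u' * w' * lcm s t :=
    calc lcm k₁ k₂ ~ᵤ lcm (u' * s) (w' * t) := hk₁'.lcm hk₂'
      _ ~ᵤ u' * lcm s (w' * t) := lcm_mul_left_associated_of_isRelPrime s hu't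
      _ ~ᵤ u' * (w' * lcm s t) := ((lcm_comm' _ _).trans
          ((lcm_mul_left_associated_of_isRelPrime t hw's).trans
            ((lcm_comm' t s).mul_left w'))).mul_left u'
      _ = u' * w' * lcm s t := (mul_assoc _ _ _).symm
  have hp' : lcm s t * gcd (gcd a b) p ~ᵤ p :=
    ((gcd_gcd_associated_gcd_gcd_gcd a b p).mul_left _).trans
      (lcm_mul_gcd_associated_of_eq_mul hp hs ht)
  calc lcm k₁ k₂ * (gcd a u * gcd b w * gcd (gcd a b) p)
      ~ᵤ u' * w' * lcm s t * (gcd a u * gcd b w * gcd (gcd a b) p) := hK.mul_right _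
    _ = gcd a u * u' * (gcd b w * w') * (lcm s t * gcd (gcd a b) p) := by ac_rfl
    _ ~ᵤ u * w * p := by rw [← hu', ← hw']; exact hp'.mul_left _

end GCDMonoid

namespace EuclideanDomain

variable {R : Type*} [EuclideanDomain R] [DecidableEq R]

theorem gcd_associated_gcd [GCDMonoid R] (x y : R) : gcd x y ~ᵤ GCDMonoid.gcd x y :=
  associated_of_dvd_dvd (GCDMonoid.dvd_gcd (gcd_dvd_left x y) (gcd_dvd_right x y))
    (dvd_gcd (GCDMonoid.gcd_dvd_left x y) (GCDMonoid.gcd_dvd_right x y))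

theorem isRelPrime_of_eq_gcd_mul {x y d u w : R} (hd : d = gcd x y) (hd0 : d ≠ 0)
    (hx : x = d * u) (hy : y = d * w) : IsRelPrime u w := fun c hcu hcw => by
  have hdc : d * c ∣ gcd x y :=
    dvd_gcd (hx ▸ mul_dvd_mul_left d hcu) (hy ▸ mul_dvd_mul_left d hcw)
  rw [← hd] at hdc
  exact isUnit_of_dvd_one ((mul_dvd_mul_iff_left hd0).1 (by rwa [mul_one]))

omit [DecidableEq R] in
theorem associated_div_of_mul_associated {k g d : R} (h : k * g ~ᵤ d) (hd : d ≠ 0) :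
    k ~ᵤ d / g := by
  have hg : g ≠ 0 := by rintro rfl; exact hd (by simpa using h.symm)
  refine Associated.of_mul_left (b := k) (d := d / g) ?_ (Associated.refl g) hg
  rw [EuclideanDomain.mul_div_cancel' hg ((dvd_mul_left g k).trans h.dvd), mul_comm]
  exact h

end EuclideanDomain

section QuasiCyclic

variable {F : Type*} [Field F]

theorem LinearMap.finrank_range_eq_natDegree_of_ker_eq {M : Type*} [AddCommGroup M] [Module F M]
    (ψ : F[X] →ₗ[F] M) {K : F[X]} (h : LinearMap.ker ψ = (Ideal.span {K}).restrictScalars F) :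
    Module.finrank F (LinearMap.range ψ) = K.natDegree := by
  rw [← ψ.quotKerEquivRange.finrank_eq, ← finrank_quotient_span_eq_natDegree,
    (Submodule.quotEquivOfEq _ _ h).finrank_eq]
  exact (Submodule.Quotient.restrictScalarsEquiv F _).finrank_eq

variable [DecidableEq F]

theorem finrank_span_mk_mul_prod_mk_mul {φ₁ φ₂ a b k₁ k₂ : F[X]} (hφ₁ : φ₁ ≠ 0) (hφ₂ : φ₂ ≠ 0)
    (hk₁ : φ₁ = gcd a φ₁ * k₁) (hk₂ : φ₂ = gcd b φ₂ * k₂) :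
    Module.finrank F (Submodule.span F {p : AdjoinRoot φ₁ × AdjoinRoot φ₂ |
      ∃ f : F[X], p = (AdjoinRoot.mk φ₁ (f * a), AdjoinRoot.mk φ₂ (f * b))}) =
      (lcm k₁ k₂).natDegree := by
  let ψ : F[X] →ₗ[F] AdjoinRoot φ₁ × AdjoinRoot φ₂ :=
    ((AdjoinRoot.mkₐ φ₁).toLinearMap ∘ₗ LinearMap.mulRight F a).prod
      ((AdjoinRoot.mkₐ φ₂).toLinearMap ∘ₗ LinearMap.mulRight F b)
  have hspan : Submodule.span F {p : AdjoinRoot φ₁ × AdjoinRoot φ₂ |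
      ∃ f : F[X], p = (AdjoinRoot.mk φ₁ (f * a), AdjoinRoot.mk φ₂ (f * b))} =
      LinearMap.range ψ := by
    rw [← Submodule.span_eq (LinearMap.range ψ)]
    congr
    ext p
    exact exists_congr fun f => eq_comm
  rw [hspan]
  refine ψ.finrank_range_eq_natDegree_of_ker_eq (Submodule.ext fun f => ?_)
  change (AdjoinRoot.mk φ₁ (f * a), AdjoinRoot.mk φ₂ (f * b)) = 0 ↔ f ∈ Ideal.span {lcm k₁ k₂}
  rw [Ideal.mem_span_singleton, lcm_dvd_iff, Prod.mk_eq_zero, AdjoinRoot.mk_eq_zero,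
    AdjoinRoot.mk_eq_zero, dvd_mul_iff_dvd_of_eq_gcd_mul hφ₁ hk₁,
    dvd_mul_iff_dvd_of_eq_gcd_mul hφ₂ hk₂]

end QuasiCyclic

theorem quasiCyclic_code_finrank_general (F : Type) [Field F] [DecidableEq F]
    (φ₁ φ₂ : Polynomial F) (hm₁ : φ₁.Monic) (hm₂ : φ₂.Monic)
    (hsq₁ : Squarefree φ₁) (hsq₂ : Squarefree φ₂)
    (φ₃ : Polynomial F) (hφ₃ : φ₃ = EuclideanDomain.gcd φ₁ φ₂)
    (a b : Polynomial F)
    (g : Polynomial F)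
    (hg : g = EuclideanDomain.gcd a (φ₁ / φ₃) * EuclideanDomain.gcd b (φ₂ / φ₃) *
      EuclideanDomain.gcd (EuclideanDomain.gcd a b) φ₃)
    (h : Polynomial F) (hh : h = φ₁ * φ₂ / (φ₃ * g)) :
    Module.finrank F
      ↥(Submodule.span F
        {p : AdjoinRoot φ₁ × AdjoinRoot φ₂ |
          ∃ f : Polynomial F, p = (AdjoinRoot.mk φ₁ (f * a), AdjoinRoot.mk φ₂ (f * b))}) =
      h.natDegree := by
  obtain ⟨u, hu⟩ : φ₃ ∣ φ₁ := hφ₃ ▸ EuclideanDomain.gcd_dvd_left φ₁ φ₂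
  obtain ⟨w, hw⟩ : φ₃ ∣ φ₂ := hφ₃ ▸ EuclideanDomain.gcd_dvd_right φ₁ φ₂
  have hφ₃0 : φ₃ ≠ 0 := left_ne_zero_of_mul (hu ▸ hm₁.ne_zero)
  obtain ⟨k₁, hk₁⟩ := gcd_dvd_right a φ₁
  obtain ⟨k₂, hk₂⟩ := gcd_dvd_right b φ₂
  rw [finrank_span_mk_mul_prod_mk_mul hm₁.ne_zero hm₂.ne_zero hk₁ hk₂]
  have huw := EuclideanDomain.isRelPrime_of_eq_gcd_mul hφ₃ hφ₃0 hu hw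
  subst hu hw
  have hg' : g ~ᵤ gcd a u * gcd b w * gcd (gcd a b) φ₃ := by
    rw [hg, mul_div_cancel_left₀ u hφ₃0, mul_div_cancel_left₀ w hφ₃0]
    exact ((EuclideanDomain.gcd_associated_gcd a u).mul_mul
      (EuclideanDomain.gcd_associated_gcd b w)).mul_mul
      ((EuclideanDomain.gcd_associated_gcd _ _).trans
        ((EuclideanDomain.gcd_associated_gcd a b).gcd (Associated.refl φ₃)))
  have hu0 : u ≠ 0 := right_ne_zero_of_mul hm₁.ne_zero
  have hw0 : w ≠ 0 := right_ne_zero_of_mul hm₂.ne_zero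
  have hK : lcm k₁ k₂ * g ~ᵤ u * w * φ₃ :=
    (hg'.mul_left _).trans (lcm_cofactors_mul_gcd_associated hφ₃0 hu0 hw0
      (.of_squarefree_mul hsq₁) (.of_squarefree_mul hsq₂) huw hk₁ hk₂)
  have hgdvd : g ∣ u * w * φ₃ := (dvd_mul_left g _).trans hK.dvd
  rw [hh, show φ₃ * u * (φ₃ * w) = φ₃ * (u * w * φ₃) by ring,
    EuclideanDomain.mul_div_mul_cancel hφ₃0 hgdvd]
  exact natDegree_eq_of_degree_eq (degree_eq_degree_of_associated
    (EuclideanDomain.associated_div_of_mul_associated hK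
      (mul_ne_zero (mul_ne_zero hu0 hw0) hφ₃0)))

/-- The φ-quasi cyclic code `C̄_{ā,b̄} = {(f·ā mod φ₁, f·b̄ mod φ₂) : f ∈ F_q[x]/⟨φ₁φ₂/φ₃⟩}`
has `F_q`-dimension equal to `deg h̄`, where `h̄ = φ₁φ₂/(φ₃·ḡ)` with
`ḡ = gcd(ā, φ₁/φ₃)·gcd(b̄, φ₂/φ₃)·gcd(ā, b̄, φ₃)` and `φ₃ = gcd(φ₁, φ₂)`. -/
theorem quasiCyclic_code_finrank (F : Type) [Field F] [Fintype F] [DecidableEq F]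
    (φ₁ φ₂ : Polynomial F) (hm₁ : φ₁.Monic) (hm₂ : φ₂.Monic)
    (hsq₁ : Squarefree φ₁) (hsq₂ : Squarefree φ₂)
    (φ₃ : Polynomial F) (hφ₃ : φ₃ = EuclideanDomain.gcd φ₁ φ₂)
    (a b : Polynomial F)
    (g : Polynomial F)
    (hg : g = EuclideanDomain.gcd a (φ₁ / φ₃) * EuclideanDomain.gcd b (φ₂ / φ₃) *
      EuclideanDomain.gcd (EuclideanDomain.gcd a b) φ₃)
    (h : Polynomial F) (hh : h = φ₁ * φ₂ / (φ₃ * g)) :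
    Module.finrank F
      ↥(Submodule.span F
        {p : AdjoinRoot φ₁ × AdjoinRoot φ₂ |
          ∃ f : Polynomial F, p = (AdjoinRoot.mk φ₁ (f * a), AdjoinRoot.mk φ₂ (f * b))}) =
      h.natDegree :=
  quasiCyclic_code_finrank_general F φ₁ φ₂ hm₁ hm₂ hsq₁ hsq₂ φ₃ hφ₃ a b g hg h hh
end

section
/- The map f ↦ (f·ā mod φ₁, f·b̄ mod φ₂) restricts to an F_q-linear isomorphism from the ideal ⟨ḡ(x)⟩ of F_q[x]/⟨φ₁φ₂/φ₃⟩ onto the code C̄_{ā,b̄}. -/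
/-!
Write `n₁ = φ₁/φ₃`, `n₂ = φ₂/φ₃`, `n₃ = φ₃`, so that `ψ = n₁n₂n₃` is squarefree. For squarefree
`n` one has `n ∣ f x ↔ n / gcd(x, n) ∣ f`. Splitting `φ₁ = n₃n₁` and `φ₂ = n₃n₂` into coprime
factors, and merging the two conditions on `n₃` into one on `gcd(a, b)`, the kernel of
`f ↦ (f a mod φ₁, f b mod φ₂)` consists exactly of the multiples of `h = ψ / g`. As `ψ = g h` is
squarefree, `g` and `h` are coprime, and the decomposition `⟨g⟩ ⊕ ⟨h⟩` of the quotient by `ψ`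
gives injectivity on `⟨g⟩` and surjectivity onto the image.
-/

open Polynomial

theorem isRelPrime_of_squarefree_mul {M : Type*} [CommMonoid M] {m s x : M}
    (hsq : Squarefree (m * s)) (h : ∀ d, d ∣ s → d ∣ x → d ∣ m) : IsRelPrime s x :=
  fun d hs hx => hsq d (mul_dvd_mul (h d hs hx) hs)

section EuclideanDomain

open EuclideanDomain

variable {R : Type*} [EuclideanDomain R]

theorem EuclideanDomain.mul_div_cancel_of_dvd {d n : R} (h : d ∣ n) : d * (n / d) = n := by
  rcases eq_or_ne d 0 with rfl | hd
  · rw [zero_mul, zero_dvd_iff.mp h]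
  · exact EuclideanDomain.mul_div_cancel' hd h

theorem Squarefree.isCoprime_of_mul {x y : R} (h : Squarefree (x * y)) : IsCoprime x y :=
  (IsRelPrime.of_squarefree_mul h).isCoprime

theorem IsCoprime.mul_dvd_iff {x y z : R} (h : IsCoprime x y) : x * y ∣ z ↔ x ∣ z ∧ y ∣ z :=
  ⟨fun hz => ⟨dvd_of_mul_right_dvd hz, dvd_of_mul_left_dvd hz⟩, fun hz => h.mul_dvd hz.1 hz.2⟩

variable [DecidableEq R]

theorem dvd_mul_gcd_iff {d f a b : R} : d ∣ f * gcd a b ↔ d ∣ f * a ∧ d ∣ f * b := by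
  refine ⟨fun h => ⟨h.trans (mul_dvd_mul_left f (gcd_dvd_left a b)),
    h.trans (mul_dvd_mul_left f (gcd_dvd_right a b))⟩, fun ⟨ha, hb⟩ => ?_⟩
  rw [gcd_eq_gcd_ab, mul_add, ← mul_assoc, ← mul_assoc]
  exact dvd_add (dvd_mul_of_dvd_left ha _) (dvd_mul_of_dvd_left hb _)

theorem Squarefree.dvd_mul_iff_div_gcd_dvd {n f x : R} (hn : Squarefree n) :
    n ∣ f * x ↔ n / gcd x n ∣ f := by
  have hn' : gcd x n * (n / gcd x n) = n := mul_div_cancel_of_dvd (gcd_dvd_right x n)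
  have hcop : IsCoprime (n / gcd x n) x :=
    (isRelPrime_of_squarefree_mul (by rwa [hn'])
      fun d hs hx => dvd_gcd hx (hs.trans (Dvd.intro_left _ hn'))).isCoprime
  constructor
  · exact fun h => hcop.dvd_of_dvd_mul_right ((Dvd.intro_left _ hn').trans h)
  · intro h
    rw [← hn', mul_comm f]
    exact mul_dvd_mul (gcd_dvd_left x n) h

theorem squarefree_div_gcd_mul_div_gcd_mul_gcd {φ₁ φ₂ : R} (h₁ : Squarefree φ₁)
    (h₂ : Squarefree φ₂) :
    Squarefree (φ₁ / gcd φ₁ φ₂ * (φ₂ / gcd φ₁ φ₂) * gcd φ₁ φ₂) := by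
  have e₁ := mul_div_cancel_of_dvd (gcd_dvd_left φ₁ φ₂)
  have e₂ := mul_div_cancel_of_dvd (gcd_dvd_right φ₁ φ₂)
  have hcop : IsRelPrime (φ₂ / gcd φ₁ φ₂) φ₁ :=
    isRelPrime_of_squarefree_mul (by rwa [e₂])
      fun d hs hx => dvd_gcd hx (hs.trans (Dvd.intro_left _ e₂))
  rw [mul_right_comm, mul_comm _ (gcd φ₁ φ₂), e₁]
  exact squarefree_mul_iff.mpr ⟨hcop.symm, h₁, h₂.squarefree_of_dvd (Dvd.intro_left _ e₂)⟩

theorem mul_div_gcd_eq {φ₁ φ₂ : R} (h : φ₁ ≠ 0) :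
    φ₁ * φ₂ / gcd φ₁ φ₂ = φ₁ / gcd φ₁ φ₂ * (φ₂ / gcd φ₁ φ₂) * gcd φ₁ φ₂ := by
  have hd : gcd φ₁ φ₂ ≠ 0 := fun h0 => h (EuclideanDomain.gcd_eq_zero_iff.mp h0).1
  have e₁ := mul_div_cancel_of_dvd (gcd_dvd_left φ₁ φ₂)
  have e₂ := mul_div_cancel_of_dvd (gcd_dvd_right φ₁ φ₂)
  have hprod : φ₁ * φ₂ = gcd φ₁ φ₂ * (φ₁ / gcd φ₁ φ₂ * (φ₂ / gcd φ₁ φ₂) * gcd φ₁ φ₂) := by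
    linear_combination (-(gcd φ₁ φ₂ * (φ₂ / gcd φ₁ φ₂))) * e₁ - φ₁ * e₂
  rw [hprod, mul_div_cancel_left₀ _ hd]

end EuclideanDomain

theorem AdjoinRoot.mk_mem_span_mk_iff_dvd {R : Type*} [CommRing R] {ψ g f : R[X]}
    (hg : g ∣ ψ) :
    AdjoinRoot.mk ψ f ∈ Ideal.span {AdjoinRoot.mk ψ g} ↔ g ∣ f := by
  rw [← Set.image_singleton, ← Ideal.map_span]
  exact (Ideal.mem_quotient_iff_mem (Ideal.span_singleton_le_span_singleton.mpr hg)).trans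
    Ideal.mem_span_singleton

namespace QuasiCyclic

section EuclideanDomain

open EuclideanDomain

variable {R : Type*} [EuclideanDomain R] [DecidableEq R]

/- With `n₁ = φ₁/φ₃`, `n₂ = φ₂/φ₃`, `n₃ = φ₃`, these are the paper's `ḡ` and `h̄`. -/
def genPoly (a b n₁ n₂ n₃ : R) : R :=
  gcd a n₁ * gcd b n₂ * gcd (gcd a b) n₃

def checkPoly (a b n₁ n₂ n₃ : R) : R :=
  n₁ / gcd a n₁ * (n₂ / gcd b n₂) * (n₃ / gcd (gcd a b) n₃)

theorem genPoly_mul_checkPoly (a b n₁ n₂ n₃ : R) :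
    genPoly a b n₁ n₂ n₃ * checkPoly a b n₁ n₂ n₃ = n₁ * n₂ * n₃ := by
  rw [genPoly, checkPoly, mul_mul_mul_comm, mul_mul_mul_comm (gcd a n₁), mul_div_cancel_of_dvd,
    mul_div_cancel_of_dvd, mul_div_cancel_of_dvd] <;> exact gcd_dvd_right _ _

theorem isCoprime_genPoly_checkPoly {a b n₁ n₂ n₃ : R} (hsq : Squarefree (n₁ * n₂ * n₃)) :
    IsCoprime (genPoly a b n₁ n₂ n₃) (checkPoly a b n₁ n₂ n₃) :=
  Squarefree.isCoprime_of_mul (by rwa [genPoly_mul_checkPoly])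

theorem dvd_mul_and_dvd_mul_iff_checkPoly_dvd (a b : R) {n₁ n₂ n₃ : R}
    (hsq : Squarefree (n₁ * n₂ * n₃)) (f : R) :
    n₃ * n₁ ∣ f * a ∧ n₃ * n₂ ∣ f * b ↔ checkPoly a b n₁ n₂ n₃ ∣ f := by
  have hcop₁ : IsCoprime n₃ n₁ :=
    Squarefree.isCoprime_of_mul (hsq.squarefree_of_dvd ⟨n₂, by ring⟩)
  have hcop₂ : IsCoprime n₃ n₂ :=
    Squarefree.isCoprime_of_mul (hsq.squarefree_of_dvd ⟨n₁, by ring⟩)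
  have hcheck : Squarefree (checkPoly a b n₁ n₂ n₃) :=
    hsq.squarefree_of_dvd (Dvd.intro_left _ (genPoly_mul_checkPoly a b n₁ n₂ n₃))
  rw [hcop₁.mul_dvd_iff, hcop₂.mul_dvd_iff, checkPoly, hcheck.isCoprime_of_mul.mul_dvd_iff,
    hcheck.of_mul_left.isCoprime_of_mul.mul_dvd_iff,
    ← hsq.of_mul_left.of_mul_left.dvd_mul_iff_div_gcd_dvd,
    ← hsq.of_mul_left.of_mul_right.dvd_mul_iff_div_gcd_dvd,
    ← hsq.of_mul_right.dvd_mul_iff_div_gcd_dvd, dvd_mul_gcd_iff]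
  tauto

end EuclideanDomain

section Quotient

variable {R : Type*} [CommRing R] {ψ g h φ₁ φ₂ a b : R[X]}

theorem mk_eq_mk_of_mem_span (hgh : g * h = ψ) (hcop : IsCoprime g h)
    (hker : ∀ f, φ₁ ∣ f * a ∧ φ₂ ∣ f * b ↔ h ∣ f) {f₁ f₂ : R[X]}
    (h₁ : AdjoinRoot.mk ψ f₁ ∈ Ideal.span {AdjoinRoot.mk ψ g})
    (h₂ : AdjoinRoot.mk ψ f₂ ∈ Ideal.span {AdjoinRoot.mk ψ g})
    (ha : AdjoinRoot.mk φ₁ (f₁ * a) = AdjoinRoot.mk φ₁ (f₂ * a))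
    (hb : AdjoinRoot.mk φ₂ (f₁ * b) = AdjoinRoot.mk φ₂ (f₂ * b)) :
    AdjoinRoot.mk ψ f₁ = AdjoinRoot.mk ψ f₂ := by
  rw [AdjoinRoot.mk_mem_span_mk_iff_dvd (Dvd.intro h hgh)] at h₁ h₂
  rw [AdjoinRoot.mk_eq_mk, ← sub_mul] at ha hb
  rw [AdjoinRoot.mk_eq_mk, ← hgh]
  exact hcop.mul_dvd (dvd_sub h₁ h₂) ((hker _).mp ⟨ha, hb⟩)

theorem exists_mem_span_mk_eq_mk (hgh : g * h = ψ) (hcop : IsCoprime g h)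
    (hker : ∀ f, φ₁ ∣ f * a ∧ φ₂ ∣ f * b ↔ h ∣ f) (f : R[X]) :
    ∃ f' : R[X], AdjoinRoot.mk ψ f' ∈ Ideal.span {AdjoinRoot.mk ψ g} ∧
      AdjoinRoot.mk φ₁ (f' * a) = AdjoinRoot.mk φ₁ (f * a) ∧
      AdjoinRoot.mk φ₂ (f' * b) = AdjoinRoot.mk φ₂ (f * b) := by
  obtain ⟨u, v, huv⟩ := hcop
  obtain ⟨h₁, h₂⟩ := (hker (f - u * g * f)).mpr ⟨v * f, by linear_combination (-f) * huv⟩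
  refine ⟨u * g * f, (AdjoinRoot.mk_mem_span_mk_iff_dvd (Dvd.intro h hgh)).mpr
    ⟨u * f, by ring⟩, ?_, ?_⟩ <;> rw [eq_comm, AdjoinRoot.mk_eq_mk, ← sub_mul] <;> assumption

end Quotient

end QuasiCyclic

theorem quasiCyclic_restriction_isomorphism_general (F : Type) [Field F] [DecidableEq F]
    (φ₁ φ₂ : Polynomial F)
    (hsq₁ : Squarefree φ₁) (hsq₂ : Squarefree φ₂)
    (φ₃ : Polynomial F) (hφ₃ : φ₃ = EuclideanDomain.gcd φ₁ φ₂)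
    (ψ : Polynomial F) (hψ : ψ = φ₁ * φ₂ / φ₃)
    (a b : Polynomial F)
    (g : Polynomial F)
    (hg : g = EuclideanDomain.gcd a (φ₁ / φ₃) * EuclideanDomain.gcd b (φ₂ / φ₃) *
      EuclideanDomain.gcd (EuclideanDomain.gcd a b) φ₃) :
    (∀ f₁ f₂ : Polynomial F,
        AdjoinRoot.mk ψ f₁ ∈ Ideal.span {AdjoinRoot.mk ψ g} →
        AdjoinRoot.mk ψ f₂ ∈ Ideal.span {AdjoinRoot.mk ψ g} →
        AdjoinRoot.mk φ₁ (f₁ * a) = AdjoinRoot.mk φ₁ (f₂ * a) →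
        AdjoinRoot.mk φ₂ (f₁ * b) = AdjoinRoot.mk φ₂ (f₂ * b) →
        AdjoinRoot.mk ψ f₁ = AdjoinRoot.mk ψ f₂) ∧
      (∀ f : Polynomial F, ∃ f' : Polynomial F,
        AdjoinRoot.mk ψ f' ∈ Ideal.span {AdjoinRoot.mk ψ g} ∧
        AdjoinRoot.mk φ₁ (f' * a) = AdjoinRoot.mk φ₁ (f * a) ∧
        AdjoinRoot.mk φ₂ (f' * b) = AdjoinRoot.mk φ₂ (f * b)) := by
  subst hφ₃ hψ hg
  have hsq := squarefree_div_gcd_mul_div_gcd_mul_gcd hsq₁ hsq₂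
  have hker := QuasiCyclic.dvd_mul_and_dvd_mul_iff_checkPoly_dvd a b hsq
  rw [EuclideanDomain.mul_div_cancel_of_dvd (EuclideanDomain.gcd_dvd_left φ₁ φ₂),
    EuclideanDomain.mul_div_cancel_of_dvd (EuclideanDomain.gcd_dvd_right φ₁ φ₂)] at hker
  rw [mul_div_gcd_eq hsq₁.ne_zero]
  have hgh := QuasiCyclic.genPoly_mul_checkPoly a b (φ₁ / EuclideanDomain.gcd φ₁ φ₂)
    (φ₂ / EuclideanDomain.gcd φ₁ φ₂) (EuclideanDomain.gcd φ₁ φ₂)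
  have hcop := QuasiCyclic.isCoprime_genPoly_checkPoly (a := a) (b := b) hsq
  exact ⟨fun _ _ => QuasiCyclic.mk_eq_mk_of_mem_span hgh hcop hker,
    QuasiCyclic.exists_mem_span_mk_eq_mk hgh hcop hker⟩

/-- The map `f ↦ (f·ā mod φ₁, f·b̄ mod φ₂)` restricts to an `F_q`-linear isomorphism from
the ideal `⟨ḡ⟩` of `F_q[x]/⟨φ₁φ₂/φ₃⟩` onto the code `C̄_{ā,b̄}`.  (Stated via
representatives through the surjection `mk ψ : F_q[x] → F_q[x]/⟨ψ⟩`, `ψ = φ₁φ₂/φ₃`: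
the restriction is injective and its image is the whole code; linearity is that of the
ambient map.) -/
theorem quasiCyclic_restriction_isomorphism (F : Type) [Field F] [Fintype F] [DecidableEq F]
    (φ₁ φ₂ : Polynomial F) (hm₁ : φ₁.Monic) (hm₂ : φ₂.Monic)
    (hsq₁ : Squarefree φ₁) (hsq₂ : Squarefree φ₂)
    (φ₃ : Polynomial F) (hφ₃ : φ₃ = EuclideanDomain.gcd φ₁ φ₂)
    (ψ : Polynomial F) (hψ : ψ = φ₁ * φ₂ / φ₃)
    (a b : Polynomial F)
    (g : Polynomial F)
    (hg : g = EuclideanDomain.gcd a (φ₁ / φ₃) * EuclideanDomain.gcd b (φ₂ / φ₃) *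
      EuclideanDomain.gcd (EuclideanDomain.gcd a b) φ₃) :
    (∀ f₁ f₂ : Polynomial F,
        AdjoinRoot.mk ψ f₁ ∈ Ideal.span {AdjoinRoot.mk ψ g} →
        AdjoinRoot.mk ψ f₂ ∈ Ideal.span {AdjoinRoot.mk ψ g} →
        AdjoinRoot.mk φ₁ (f₁ * a) = AdjoinRoot.mk φ₁ (f₂ * a) →
        AdjoinRoot.mk φ₂ (f₁ * b) = AdjoinRoot.mk φ₂ (f₂ * b) →
        AdjoinRoot.mk ψ f₁ = AdjoinRoot.mk ψ f₂) ∧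
      (∀ f : Polynomial F, ∃ f' : Polynomial F,
        AdjoinRoot.mk ψ f' ∈ Ideal.span {AdjoinRoot.mk ψ g} ∧
        AdjoinRoot.mk φ₁ (f' * a) = AdjoinRoot.mk φ₁ (f * a) ∧
        AdjoinRoot.mk φ₂ (f' * b) = AdjoinRoot.mk φ₂ (f * b)) :=
  quasiCyclic_restriction_isomorphism_general F φ₁ φ₂ hsq₁ hsq₂ φ₃ hφ₃ ψ hψ a b g hg
end
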